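/- arXiv:1102.0415 — 8 statements merged into one kernel-verified Lean document; each statement's English description precedes it below -/
import Mathlib

section
/- Let X and Y be real Banach spaces, L > 0, F : X ⇒ Y a multifunction and (x̄,ȳ) ∈ Gr F. Then the following are equivalent: (a) F is L-open at (x̄,ȳ); (b) F⁻¹ is L⁻¹-pseudocalm at (ȳ,x̄); (c) F is L⁻¹-metrically hemiregular at (x̄,ȳ). -/
open Metric Set Filter Topology

/-- `F` is `L`-open at `(xb, yb)`: there is `ε > 0` such that
`B(yb, ρL) ⊆ F(B(xb, ρ))` for every `ρ ∈ (0, ε)`. -/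
def IsOpenAtPt {X Y : Type*} [NormedAddCommGroup X] [NormedAddCommGroup Y]
    (F : X → Set Y) (xb : X) (yb : Y) (L : ℝ) : Prop :=
  ∃ ε > (0 : ℝ), ∀ ρ ∈ Set.Ioo (0 : ℝ) ε, ball yb (ρ * L) ⊆ ⋃ x ∈ ball xb ρ, F x

/-- `F` is `L`-pseudocalm at `(xb, yb)`: there is a neighborhood `U` of `xb` such that
`d(yb, F(x)) ≤ L‖x - xb‖` for every `x ∈ U` (with `d(·,∅) = ∞`). -/
def IsPseudocalmAt {X Y : Type*} [NormedAddCommGroup X] [NormedAddCommGroup Y]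
    (F : X → Set Y) (xb : X) (yb : Y) (L : ℝ) : Prop :=
  ∃ U ∈ 𝓝 xb, ∀ x ∈ U, EMetric.infEdist yb (F x) ≤ ENNReal.ofReal (L * ‖x - xb‖)

/-- `F` is `L`-metrically hemiregular at `(xb, yb)`: there is a neighborhood `V` of `yb`
such that `d(xb, F⁻¹(y)) ≤ L‖y - yb‖` for every `y ∈ V`. -/
def IsHemiregularAt {X Y : Type*} [NormedAddCommGroup X] [NormedAddCommGroup Y]
    (F : X → Set Y) (xb : X) (yb : Y) (L : ℝ) : Prop :=
  ∃ V ∈ 𝓝 yb, ∀ y ∈ V, EMetric.infEdist xb {x | y ∈ F x} ≤ ENNReal.ofReal (L * ‖y - yb‖)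

/-!
A point `y` lies in `F(B(x̄, ρ))` exactly when `d(x̄, F⁻¹(y)) < ρ`. Hence `L`-openness says
`d(x̄, F⁻¹(y)) < ρ` whenever `‖y - ȳ‖ < ρL` for small `ρ`; letting `ρ` decrease to `‖y - ȳ‖/L`
gives hemiregularity with constant `L⁻¹`, and conversely. Pseudocalmness of `F⁻¹` at `(ȳ, x̄)` is
hemiregularity of `F` at `(x̄, ȳ)` written for the inverse.
-/

theorem mem_biUnion_ball_iff_infEDist_lt {X Y : Type*} [PseudoMetricSpace X] {F : X → Set Y}
    {xb : X} {y : Y} {ρ : ℝ} :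
    y ∈ ⋃ x ∈ ball xb ρ, F x ↔ infEDist xb {x | y ∈ F x} < ENNReal.ofReal ρ := by
  rw [infEDist_lt_iff]
  simp only [edist_lt_ofReal, mem_iUnion₂, mem_ball, mem_ofPred_eq, dist_comm xb, exists_prop,
    and_comm]

section

variable {X Y : Type*} [NormedAddCommGroup X] [NormedAddCommGroup Y]
  {F : X → Set Y} {xb : X} {yb : Y} {L : ℝ}

theorem IsOpenAtPt.isHemiregularAt (h : IsOpenAtPt F xb yb L) (hL : 0 < L) :
    IsHemiregularAt F xb yb L⁻¹ := by
  obtain ⟨ε, hε, hopen⟩ := h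
  refine ⟨ball yb (ε * L), ball_mem_nhds _ (by positivity), fun y hy => ?_⟩
  rw [mem_ball, dist_eq_norm, ← inv_mul_lt_iff₀' hL] at hy
  set r := L⁻¹ * ‖y - yb‖
  have hnear : ∀ ρ ∈ Ioo r ε, infEDist xb {x | y ∈ F x} ≤ ENNReal.ofReal ρ := by
    rintro ρ ⟨hrρ, hρε⟩
    refine (mem_biUnion_ball_iff_infEDist_lt.mp (hopen ρ ⟨?_, hρε⟩ ?_)).le
    · exact (by positivity : 0 ≤ r).trans_lt hrρ
    · rwa [mem_ball, dist_eq_norm, ← inv_mul_lt_iff₀' hL]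
  have hlim : Tendsto ENNReal.ofReal (𝓝[>] r) (𝓝 (ENNReal.ofReal r)) :=
    (ENNReal.continuous_ofReal.tendsto r).mono_left nhdsWithin_le_nhds
  exact ge_of_tendsto hlim (eventually_of_mem (Ioo_mem_nhdsGT hy) hnear)

theorem IsHemiregularAt.isOpenAtPt (h : IsHemiregularAt F xb yb L⁻¹) (hL : 0 < L) :
    IsOpenAtPt F xb yb L := by
  obtain ⟨V, hV, hreg⟩ := h
  obtain ⟨δ, hδ, hball⟩ := Metric.mem_nhds_iff.mp hV
  refine ⟨δ / L, by positivity, fun ρ ⟨hρ, hρδ⟩ y hy => ?_⟩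
  rw [mem_ball, dist_eq_norm] at hy
  have hyV : y ∈ V := hball <| by
    rw [mem_ball, dist_eq_norm]
    exact hy.trans ((lt_div_iff₀ hL).mp hρδ)
  refine mem_biUnion_ball_iff_infEDist_lt.mpr ((hreg y hyV).trans_lt ?_)
  rwa [ENNReal.ofReal_lt_ofReal_iff hρ, inv_mul_lt_iff₀' hL]

theorem isOpenAtPt_iff_isHemiregularAt (hL : 0 < L) :
    IsOpenAtPt F xb yb L ↔ IsHemiregularAt F xb yb L⁻¹ :=
  ⟨fun h => h.isHemiregularAt hL, fun h => h.isOpenAtPt hL⟩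

end

theorem stmt0_general {X Y : Type*} [NormedAddCommGroup X]
    [NormedAddCommGroup Y]
    (F : X → Set Y) (xb : X) (yb : Y) (L : ℝ) (hL : 0 < L) :
    (IsOpenAtPt F xb yb L ↔ IsPseudocalmAt (fun y => {x | y ∈ F x}) yb xb L⁻¹) ∧
    (IsOpenAtPt F xb yb L ↔ IsHemiregularAt F xb yb L⁻¹) :=
  ⟨isOpenAtPt_iff_isHemiregularAt hL, isOpenAtPt_iff_isHemiregularAt hL⟩

/-- for `L > 0` and `(xb, yb) ∈ Gr F`, the following are equivalent:
`F` is `L`-open at `(xb,yb)`; `F⁻¹` is `L⁻¹`-pseudocalm at `(yb,xb)`;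
`F` is `L⁻¹`-metrically hemiregular at `(xb,yb)`. -/
theorem stmt0 {X Y : Type*} [NormedAddCommGroup X] [NormedSpace ℝ X] [CompleteSpace X]
    [NormedAddCommGroup Y] [NormedSpace ℝ Y] [CompleteSpace Y]
    (F : X → Set Y) (xb : X) (yb : Y) (L : ℝ) (hL : 0 < L) (hgr : yb ∈ F xb) :
    (IsOpenAtPt F xb yb L ↔ IsPseudocalmAt (fun y => {x | y ∈ F x}) yb xb L⁻¹) ∧
    (IsOpenAtPt F xb yb L ↔ IsHemiregularAt F xb yb L⁻¹) :=
  stmt0_general F xb yb L hL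
end

section
/- Let X and Y be real Banach spaces and let F : X ⇒ Y and G : Y ⇒ X be multifunctions such that Gr F and Gr G are locally closed. Suppose Dom(F − G⁻¹) and Dom(G − F⁻¹) are nonempty and let L > 0 and M > 0 satisfy LM > 1. If F is L-open at every point of its graph and G is M-open at every point of its graph, then F − G⁻¹ is (L − M⁻¹)-open at every point of its graph and G − F⁻¹ is (M − L⁻¹)-open at every point of its graph. -/
open Metric Set Filter Topology

/-- A set is locally closed if every of its points has a neighborhood `W` such that
`S ∩ cl W` is closed. -/
def LocallyClosedSet {α : Type*} [TopologicalSpace α] (S : Set α) : Prop :=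
  ∀ a ∈ S, ∃ W ∈ 𝓝 a, IsClosed (S ∩ closure W)

/-- The difference multifunction `F - G⁻¹ : X ⇒ Y`,
`(F - G⁻¹)(x) = {y - z : y ∈ F(x), z ∈ G⁻¹(x)}`. -/
def mdiff {X Y : Type*} [SubtractionMonoid Y] (F : X → Set Y) (G : Y → Set X) :
    X → Set Y :=
  fun x => {w | ∃ y ∈ F x, ∃ z, x ∈ G z ∧ w = y - z}

/-!
Rescaling `Y` by `L⁻¹` turns `F` into a `1`-open and `G` into an `LM`-open multifunction, so it
suffices to treat `L = 1 < M`. Near a point of the coupled graph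
`{(x, y, z) | y ∈ F x, x ∈ G z}`, which is closed in a small ball, one drives
`φ (x, y, z) = ‖w - (y - z)‖` to zero by an Ekeland-type descent: openness of `F` moves `y` a
distance `τ` towards `w` at an `x`-cost of about `τ`, and openness of `G` then restores
`x ∈ G z` at a `z`-cost of about `τ / M`, so `φ` drops by about `(1 - M⁻¹) τ`. Hence `φ` has a
zero within distance `φ (x₀, y₀, z₀) / c` of the starting point, for every `c < 1 - M⁻¹`.
-/

section Descent

variable {E : Type*} [PseudoMetricSpace E]

def descentCone (S : Set E) (φ : E → ℝ) (c : ℝ) (p : E) : Set E :=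
  {q ∈ S | φ q + c * dist p q ≤ φ p}

variable {S : Set E} {φ : E → ℝ} {c : ℝ}

lemma self_mem_descentCone {p : E} (hp : p ∈ S) : p ∈ descentCone S φ c p := by
  simp [descentCone, hp]

lemma descentCone_trans (hc : 0 ≤ c) {p q r : E} (hq : q ∈ descentCone S φ c p)
    (hr : r ∈ descentCone S φ c q) : r ∈ descentCone S φ c p := by
  refine ⟨hr.1, ?_⟩
  have := mul_le_mul_of_nonneg_left (dist_triangle p q r) hc
  linarith [hq.2, hr.2]

lemma isClosed_descentCone (hS : IsClosed S) (hφ : Continuous φ) (p : E) :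
    IsClosed (descentCone S φ c p) :=
  hS.inter (isClosed_le (hφ.add (continuous_const.mul (continuous_const.dist continuous_id)))
    continuous_const)

lemma descentCone_mono {S' : Set E} (h : S ⊆ S') (p : E) :
    descentCone S φ c p ⊆ descentCone S' φ c p :=
  fun _ hq => ⟨h hq.1, hq.2⟩

lemma exists_seq_succ_mem_descentCone (hφ0 : ∀ p, 0 ≤ φ p) {p₀ : E} (hp₀ : p₀ ∈ S) :
    ∃ u : ℕ → E, u 0 = p₀ ∧ ∀ n, u (n + 1) ∈ descentCone S φ c (u n) ∧
      ∀ r ∈ descentCone S φ c (u n), φ (u (n + 1)) ≤ φ r + (1 / 2) ^ n := by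
  have hnext : ∀ (n : ℕ) (p : E), ∃ q, p ∈ S →
      q ∈ descentCone S φ c p ∧ ∀ r ∈ descentCone S φ c p, φ q ≤ φ r + (1 / 2) ^ n := by
    intro n p
    by_cases hp : p ∈ S
    · obtain ⟨_, ⟨q, hq, rfl⟩, hlt⟩ := Real.lt_sInf_add_pos
        ⟨φ p, mem_image_of_mem φ (self_mem_descentCone hp)⟩ (by positivity : (0 : ℝ) < (1 / 2) ^ n)
      refine ⟨q, fun _ => ⟨hq, fun r hr => ?_⟩⟩
      have := csInf_le ⟨0, forall_mem_image.2 fun r _ => hφ0 r⟩ (mem_image_of_mem φ hr)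
      linarith
    · exact ⟨p, fun h => absurd h hp⟩
  choose next hnext using hnext
  let u : ℕ → E := fun n => Nat.rec p₀ next n
  have hmem : ∀ n, u n ∈ S := by
    intro n
    induction n with
    | zero => exact hp₀
    | succ n ih => exact ((hnext n _ ih).1).1
  exact ⟨u, rfl, fun n => hnext n (u n) (hmem n)⟩

lemma mem_descentCone_of_le {u : ℕ → E} (hu0 : u 0 ∈ S)
    (hu : ∀ n, u (n + 1) ∈ descentCone S φ c (u n)) (hc : 0 ≤ c) {n m : ℕ} (hnm : n ≤ m) :
    u m ∈ descentCone S φ c (u n) := by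
  have hmem : u n ∈ S := by
    cases n with
    | zero => exact hu0
    | succ k => exact (hu k).1
  induction m, hnm using Nat.le_induction with
  | base => exact self_mem_descentCone hmem
  | succ m _ ih => exact descentCone_trans hc ih (hu m)

lemma cauchySeq_of_succ_mem_descentCone {u : ℕ → E} (hu0 : u 0 ∈ S)
    (hu : ∀ n, u (n + 1) ∈ descentCone S φ c (u n)) (hφ0 : ∀ p, 0 ≤ φ p) (hc : 0 < c) :
    CauchySeq u := by
  have hanti : Antitone (φ ∘ u) := antitone_nat_of_succ_le fun n => by
    have := (hu n).2
    have := mul_nonneg hc.le (dist_nonneg (x := u n) (y := u (n + 1)))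
    simp only [Function.comp]
    linarith
  obtain ⟨l, hl⟩ : ∃ l, Tendsto (φ ∘ u) atTop (𝓝 l) :=
    ⟨_, tendsto_atTop_ciInf hanti ⟨0, forall_mem_range.2 fun n => hφ0 (u n)⟩⟩
  refine cauchySeq_of_le_tendsto_0 (fun N => (φ (u N) - l) / c) (fun n m N hn hm => ?_) ?_
  · rw [le_div_iff₀ hc]
    wlog hnm : n ≤ m generalizing n m
    · rw [dist_comm]; exact this m n hm hn (le_of_not_ge hnm)
    have := (mem_descentCone_of_le hu0 hu hc.le hnm).2
    have := hanti hn
    have := hanti.le_of_tendsto hl m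
    simp only [Function.comp] at *
    linarith
  · simpa using (hl.sub_const l).div_const c

theorem exists_mem_descentCone_eq_zero [CompleteSpace E] (hS : IsClosed S) (hφ : Continuous φ)
    (hφ0 : ∀ p, 0 ≤ φ p) (hc : 0 < c)
    (hstep : ∀ p ∈ S, 0 < φ p → ∃ q ∈ S, φ q + c * dist p q < φ p) {p₀ : E} (hp₀ : p₀ ∈ S) :
    ∃ p ∈ descentCone S φ c p₀, φ p = 0 := by
  obtain ⟨u, rfl, hu_min⟩ := exists_seq_succ_mem_descentCone (c := c) hφ0 hp₀
  have hu n := (hu_min n).1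
  obtain ⟨p, hp⟩ := cauchySeq_tendsto_of_complete (cauchySeq_of_succ_mem_descentCone hp₀ hu hφ0 hc)
  have hp_cone : ∀ n, p ∈ descentCone S φ c (u n) := fun n =>
    (isClosed_descentCone hS hφ _).mem_of_tendsto hp
      ((eventually_ge_atTop n).mono fun m hm => mem_descentCone_of_le hp₀ hu hc.le hm)
  refine ⟨p, hp_cone 0, (hφ0 p).antisymm' (not_lt.1 fun hpos => ?_)⟩
  -- a strict descent step from the limit `p` would undercut the near-minimality of the `u n`
  obtain ⟨q, hqS, hq⟩ := hstep p (hp_cone 0).1 hpos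
  have hqp : φ q < φ p := by nlinarith [dist_nonneg (x := p) (y := q)]
  obtain ⟨n, hn⟩ := exists_pow_lt_of_lt_one (sub_pos.2 hqp) (by norm_num : (1 / 2 : ℝ) < 1)
  have := (hu_min n).2 q (descentCone_trans hc.le (hp_cone n) ⟨hqS, hq.le⟩)
  have := (hp_cone (n + 1)).2
  have := mul_nonneg hc.le (dist_nonneg (x := u (n + 1)) (y := p))
  linarith

theorem exists_mem_descentCone_eq_zero_of_isClosed_inter_closedBall [CompleteSpace E]
    {p₀ : E} {R : ℝ} (hS : IsClosed (S ∩ closedBall p₀ R)) (hφ : Continuous φ)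
    (hφ0 : ∀ p, 0 ≤ φ p) (hc : 0 < c) (hp₀ : p₀ ∈ S) (hR : φ p₀ ≤ c * R)
    (hstep : ∀ p ∈ S, 0 < φ p → ∃ q ∈ S, φ q + c * dist p q < φ p) :
    ∃ p ∈ descentCone S φ c p₀, φ p = 0 := by
  have hR0 : 0 ≤ R := nonneg_of_mul_nonneg_right ((hφ0 p₀).trans hR) hc
  have hstep' : ∀ p ∈ descentCone (S ∩ closedBall p₀ R) φ c p₀, 0 < φ p →
      ∃ q ∈ descentCone (S ∩ closedBall p₀ R) φ c p₀, φ q + c * dist p q < φ p := by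
    intro p hp hpos
    obtain ⟨q, hqS, hq⟩ := hstep p hp.1.1 hpos
    have hq_cone : q ∈ descentCone S φ c p₀ :=
      descentCone_trans hc.le (descentCone_mono inter_subset_left p₀ hp) ⟨hqS, hq.le⟩
    have hq_ball : q ∈ closedBall p₀ R := by
      rw [mem_closedBall, dist_comm, ← mul_le_mul_iff_of_pos_left hc]
      linarith [hq_cone.2, hφ0 q]
    exact ⟨q, descentCone_trans hc.le hp ⟨⟨hqS, hq_ball⟩, hq.le⟩, hq⟩
  obtain ⟨p, hp, hp0⟩ := exists_mem_descentCone_eq_zero (isClosed_descentCone hS hφ p₀) hφ hφ0 hc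
    hstep' (self_mem_descentCone ⟨hp₀, mem_closedBall_self hR0⟩)
  exact ⟨p, descentCone_mono inter_subset_left p₀ hp.1, hp0⟩

end Descent

section LocallyClosed

variable {α β : Type*}

lemma LocallyClosedSet.preimage [TopologicalSpace α] [TopologicalSpace β] {S : Set β} {f : α → β}
    (hS : LocallyClosedSet S) (hf : Continuous f) : LocallyClosedSet (f ⁻¹' S) := by
  intro a ha
  obtain ⟨W, hW, hclosed⟩ := hS (f a) ha
  refine ⟨f ⁻¹' W, hf.continuousAt.preimage_mem_nhds hW, ?_⟩
  have : f ⁻¹' S ∩ closure (f ⁻¹' W) = f ⁻¹' (S ∩ closure W) ∩ closure (f ⁻¹' W) := by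
    have := hf.closure_preimage_subset W
    ext x; constructor
    · exact fun hx => ⟨⟨hx.1, this hx.2⟩, hx.2⟩
    · exact fun hx => ⟨hx.1.1, hx.2⟩
  rw [this]
  exact (hclosed.preimage hf).inter isClosed_closure

lemma LocallyClosedSet.eventually_isClosed_inter_closedBall [PseudoMetricSpace α] {S : Set α}
    (hS : LocallyClosedSet S) {a : α} (ha : a ∈ S) :
    ∀ᶠ r in 𝓝 (0 : ℝ), IsClosed (S ∩ closedBall a r) := by
  obtain ⟨W, hW, hclosed⟩ := hS a ha
  obtain ⟨r₀, hr₀, hball⟩ := nhds_basis_closedBall.mem_iff.1 hW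
  filter_upwards [eventually_lt_nhds hr₀] with r hr
  have hsub : closedBall a r ⊆ closure W :=
    (closedBall_subset_closedBall hr.le).trans (hball.trans subset_closure)
  rw [← inter_eq_right.2 hsub, ← inter_assoc]
  exact hclosed.inter isClosed_closedBall

lemma isClosed_preimage_inter_closedBall [PseudoMetricSpace α] [PseudoMetricSpace β] {A : Set β}
    {f : α → β} (hf : LipschitzWith 1 f) {a : α} {r : ℝ} (hA : IsClosed (A ∩ closedBall (f a) r)) :
    IsClosed (f ⁻¹' A ∩ closedBall a r) := by
  have hsub : closedBall a r ⊆ f ⁻¹' closedBall (f a) r := fun x hx => by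
    simpa using hf.dist_le_mul x a |>.trans (by simpa using hx)
  rw [← inter_eq_right.2 hsub, ← inter_assoc, ← preimage_inter]
  exact (hA.preimage hf.continuous).inter isClosed_closedBall

end LocallyClosed

lemma mdiff_preimage_smul {X Y 𝕜 : Type*} [Field 𝕜] [AddCommGroup Y] [Module 𝕜 Y] {a : 𝕜}
    (ha : a ≠ 0) (F : X → Set Y) (G : Y → Set X) :
    mdiff (fun x => (a • ·) ⁻¹' F x) (fun v => G (a • v)) = fun x => (a • ·) ⁻¹' mdiff F G x := by
  ext x w
  constructor
  · rintro ⟨v, hv, s, hs, rfl⟩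
    exact ⟨a • v, hv, a • s, hs, smul_sub a v s⟩
  · rintro ⟨y, hy, z, hz, hw⟩
    refine ⟨a⁻¹ • y, by simpa [smul_inv_smul₀ ha] using hy, a⁻¹ • z,
      by simpa [smul_inv_smul₀ ha] using hz, ?_⟩
    rw [← smul_sub, ← hw, inv_smul_smul₀ ha]

section Openness

variable {X Y : Type*} [NormedAddCommGroup X] [NormedAddCommGroup Y]

def coupledGraph (F : X → Set Y) (G : Y → Set X) : Set (X × Y × Y) :=
  {p | p.2.1 ∈ F p.1 ∧ p.1 ∈ G p.2.2}

lemma eventually_isClosed_coupledGraph_inter_closedBall {F : X → Set Y} {G : Y → Set X}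
    (hFcl : LocallyClosedSet {p : X × Y | p.2 ∈ F p.1})
    (hGcl : LocallyClosedSet {p : Y × X | p.2 ∈ G p.1}) {p₀ : X × Y × Y}
    (hp₀ : p₀ ∈ coupledGraph F G) :
    ∀ᶠ r in 𝓝 (0 : ℝ), IsClosed (coupledGraph F G ∩ closedBall p₀ r) := by
  filter_upwards [hFcl.eventually_isClosed_inter_closedBall (a := (p₀.1, p₀.2.1)) hp₀.1,
    hGcl.eventually_isClosed_inter_closedBall (a := (p₀.2.2, p₀.1)) hp₀.2] with r hF hG
  have hF' := isClosed_preimage_inter_closedBall (f := fun p : X × Y × Y => (p.1, p.2.1))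
    (by simpa using
      LipschitzWith.prod_fst.prodMk (LipschitzWith.prod_fst.comp LipschitzWith.prod_snd)) hF
  have hG' := isClosed_preimage_inter_closedBall (f := fun p : X × Y × Y => (p.2.2, p.1))
    (by simpa using
      (LipschitzWith.prod_snd.comp LipschitzWith.prod_snd).prodMk LipschitzWith.prod_fst) hG
  have := hF'.inter hG'
  rwa [← inter_inter_distrib_right] at this

lemma exists_gt_one_sq_div_add_mul_lt_one {M c : ℝ} (hM : 1 < M) (hc : c < 1 - M⁻¹) :
    ∃ t, 1 < t ∧ t ≤ M ∧ t ^ 2 / M + c * t < 1 := by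
  have h : ∀ᶠ t in 𝓝 (1 : ℝ), t < M ∧ t ^ 2 / M + c * t < 1 :=
    (eventually_lt_nhds hM).and <| ContinuousAt.eventually_lt (by fun_prop) continuousAt_const
      (by rw [one_pow, one_div, mul_one]; linarith)
  obtain ⟨t, ⟨htM, ht⟩, ht1⟩ := ((h.filter_mono nhdsWithin_le_nhds).and self_mem_nhdsWithin).exists
    (f := 𝓝[>] (1 : ℝ))
  exact ⟨t, ht1, htM.le, ht⟩

variable [NormedSpace ℝ Y]

lemma norm_sub_smul_add_le {h e : Y} {τ : ℝ} (hτ : 0 ≤ τ) (hτh : τ ≤ ‖h‖) :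
    ‖h - (τ / ‖h‖) • h + e‖ ≤ ‖h‖ - τ + ‖e‖ := by
  have hτh' : τ / ‖h‖ ≤ 1 := div_le_one_of_le₀ hτh (norm_nonneg h)
  calc ‖h - (τ / ‖h‖) • h + e‖ ≤ ‖(1 - τ / ‖h‖) • h‖ + ‖e‖ := by
        rw [sub_smul, one_smul]; exact norm_add_le _ _
    _ = ‖h‖ - τ + ‖e‖ := by
        rw [norm_smul, Real.norm_of_nonneg (sub_nonneg.2 hτh'), sub_mul, one_mul,
          div_mul_cancel_of_imp fun h0 => by simp [h0] at hτh ⊢; linarith]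

lemma exists_mem_coupledGraph_descent {F : X → Set Y} {G : Y → Set X} {M c : ℝ}
    (hFopen : ∀ x y, y ∈ F x → IsOpenAtPt F x y 1)
    (hGopen : ∀ y x, x ∈ G y → IsOpenAtPt G y x M) (hM : 1 < M) (hc0 : 0 ≤ c)
    (hc : c < 1 - M⁻¹) (w : Y) {p : X × Y × Y} (hp : p ∈ coupledGraph F G)
    (hpos : 0 < ‖w - (p.2.1 - p.2.2)‖) :
    ∃ q ∈ coupledGraph F G, ‖w - (q.2.1 - q.2.2)‖ + c * dist p q < ‖w - (p.2.1 - p.2.2)‖ := by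
  obtain ⟨x, y, z⟩ := p
  obtain ⟨hy, hx⟩ := hp
  set h := w - (y - z)
  obtain ⟨t, ht1, htM, ht⟩ := exists_gt_one_sq_div_add_mul_lt_one hM hc
  obtain ⟨εF, hεF, hFo⟩ := hFopen x y hy
  obtain ⟨εG, hεG, hGo⟩ := hGopen z x hx
  have hsmall : ∀ᶠ τ in 𝓝 (0 : ℝ), τ < ‖h‖ ∧ t * τ < εF ∧ t ^ 2 / M * τ < εG :=
    (eventually_lt_nhds hpos).and <|
      (ContinuousAt.eventually_lt (by fun_prop) continuousAt_const (by simpa using hεF)).and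
      (ContinuousAt.eventually_lt (by fun_prop) continuousAt_const (by simpa using hεG))
  obtain ⟨τ, ⟨hτh, hτF, hτG⟩, hτ : 0 < τ⟩ :=
    ((hsmall.filter_mono nhdsWithin_le_nhds).and self_mem_nhdsWithin).exists (f := 𝓝[>] (0 : ℝ))
  set y' := y + (τ / ‖h‖) • h
  have hy' : dist y' y = τ := by
    rw [dist_eq_norm, add_sub_cancel_left, norm_smul, Real.norm_of_nonneg (by positivity),
      div_mul_cancel₀ _ hpos.ne']
  obtain ⟨x', hx', hy'F⟩ := mem_iUnion₂.1 <| hFo (t * τ) ⟨by positivity, hτF⟩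
    (by rw [mem_ball, hy', mul_one]; nlinarith)
  obtain ⟨z', hz', hx'G⟩ := mem_iUnion₂.1 <| hGo (t ^ 2 / M * τ) ⟨by positivity, hτG⟩
    (show x' ∈ _ by
      rw [mem_ball] at hx' ⊢
      have : t ^ 2 / M * τ * M = t * (t * τ) := by field_simp
      nlinarith [mul_lt_mul_of_pos_right ht1 (by positivity : 0 < t * τ)])
  rw [mem_ball] at hx' hz'
  refine ⟨(x', y', z'), ⟨hy'F, hx'G⟩, ?_⟩
  have hφ : ‖w - (y' - z')‖ ≤ ‖h‖ - τ + dist z' z := by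
    rw [dist_eq_norm, show w - (y' - z') = h - (τ / ‖h‖) • h + (z' - z) by simp only [y', h]; abel]
    exact norm_sub_smul_add_le hτ.le hτh.le
  have hdist : dist (x, y, z) (x', y', z') ≤ t * τ := by
    have : t ^ 2 / M * τ ≤ t * τ := by
      rw [div_mul_eq_mul_div, div_le_iff₀ (by linarith)]
      nlinarith [mul_le_mul_of_nonneg_left htM (by positivity : 0 ≤ t * τ)]
    simp only [Prod.dist_eq, max_le_iff]
    refine ⟨by rw [dist_comm]; linarith, by rw [dist_comm, hy']; nlinarith, ?_⟩
    rw [dist_comm]; linarith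
  have := mul_le_mul_of_nonneg_left hdist hc0
  nlinarith

theorem isOpenAtPt_mdiff_of_one [CompleteSpace X] [CompleteSpace Y] {F : X → Set Y}
    {G : Y → Set X} (hFcl : LocallyClosedSet {p : X × Y | p.2 ∈ F p.1})
    (hGcl : LocallyClosedSet {p : Y × X | p.2 ∈ G p.1}) {M : ℝ} (hM : 1 < M)
    (hFopen : ∀ x y, y ∈ F x → IsOpenAtPt F x y 1)
    (hGopen : ∀ y x, x ∈ G y → IsOpenAtPt G y x M) {x₀ : X} {w₀ : Y}
    (hw₀ : w₀ ∈ mdiff F G x₀) : IsOpenAtPt (mdiff F G) x₀ w₀ (1 - M⁻¹) := by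
  obtain ⟨y₀, hy₀, z₀, hz₀, rfl⟩ := hw₀
  set p₀ : X × Y × Y := (x₀, y₀, z₀)
  have hclosed := eventually_isClosed_coupledGraph_inter_closedBall hFcl hGcl
    (show p₀ ∈ coupledGraph F G from ⟨hy₀, hz₀⟩)
  obtain ⟨R, hRclosed, hR : 0 < R⟩ :=
    ((hclosed.filter_mono nhdsWithin_le_nhds).and self_mem_nhdsWithin).exists (f := 𝓝[>] (0 : ℝ))
  refine ⟨R, hR, fun ρ ⟨hρ, hρR⟩ w hw => ?_⟩
  rw [mem_ball, dist_eq_norm, ← div_lt_iff₀' hρ] at hw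
  obtain ⟨c, hwc, hc⟩ := exists_between hw
  have hc0 : 0 < c := (div_nonneg (norm_nonneg _) hρ.le).trans_lt hwc
  rw [div_lt_iff₀ hρ] at hwc
  obtain ⟨p, ⟨hp, hpdist⟩, hp0⟩ := exists_mem_descentCone_eq_zero_of_isClosed_inter_closedBall
    (φ := fun p : X × Y × Y => ‖w - (p.2.1 - p.2.2)‖) hRclosed (by fun_prop)
    (fun _ => norm_nonneg _) hc0 (show p₀ ∈ coupledGraph F G from ⟨hy₀, hz₀⟩)
    (by nlinarith)
    (fun p hp hpos => exists_mem_coupledGraph_descent hFopen hGopen hM hc0.le hc w hp hpos)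
  simp only [hp0, zero_add] at hpdist
  refine mem_iUnion₂.2 ⟨p.1, ?_, p.2.1, hp.1, p.2.2, hp.2, (sub_eq_zero.1 (norm_eq_zero.1 hp0))⟩
  have : dist p₀ p < ρ := lt_of_mul_lt_mul_left (hpdist.trans_lt hwc) hc0.le
  rw [mem_ball, dist_comm]
  exact (Prod.dist_eq (x := p₀) (y := p) ▸ le_max_left _ _).trans_lt this

lemma isOpenAtPt_preimage_smul_iff {a : ℝ} (ha : 0 < a) {F : X → Set Y} {x₀ : X} {v₀ : Y}
    {L : ℝ} :
    IsOpenAtPt (fun x => (a • ·) ⁻¹' F x) x₀ v₀ L ↔ IsOpenAtPt F x₀ (a • v₀) (a * L) := by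
  have key : ∀ ρ, ball v₀ (ρ * L) ⊆ ⋃ x ∈ ball x₀ ρ, (a • ·) ⁻¹' F x ↔
      ball (a • v₀) (ρ * (a * L)) ⊆ ⋃ x ∈ ball x₀ ρ, F x := fun ρ => by
    rw [← preimage_iUnion₂, ← image_subset_iff, image_smul, _root_.smul_ball ha.ne',
      Real.norm_of_nonneg ha.le, mul_left_comm]
  simp only [IsOpenAtPt, key]

lemma IsOpenAtPt.comp_smul {a : ℝ} (ha : 0 < a) {G : Y → Set X} {v₀ : Y} {x₀ : X} {M : ℝ}
    (h : IsOpenAtPt G (a • v₀) x₀ M) : IsOpenAtPt (fun v => G (a • v)) v₀ x₀ (a * M) := by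
  obtain ⟨ε, hε, hG⟩ := h
  refine ⟨ε / a, by positivity, fun ρ ⟨hρ, hρε⟩ x hx => ?_⟩
  rw [lt_div_iff₀ ha] at hρε
  obtain ⟨y, hy, hxy⟩ := mem_iUnion₂.1 <| hG (ρ * a) ⟨by positivity, hρε⟩
    (show x ∈ ball x₀ (ρ * a * M) by rwa [mul_assoc])
  refine mem_iUnion₂.2 ⟨a⁻¹ • y, ?_, show x ∈ G (a • a⁻¹ • y) by rwa [smul_inv_smul₀ ha.ne']⟩
  rw [mem_ball, dist_eq_norm] at hy ⊢
  rw [← inv_smul_smul₀ ha.ne' v₀, ← smul_sub, norm_smul, Real.norm_of_nonneg (by positivity),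
    inv_mul_lt_iff₀ ha, mul_comm]
  exact hy

theorem isOpenAtPt_mdiff [CompleteSpace X] [CompleteSpace Y] {F : X → Set Y} {G : Y → Set X}
    (hFcl : LocallyClosedSet {p : X × Y | p.2 ∈ F p.1})
    (hGcl : LocallyClosedSet {p : Y × X | p.2 ∈ G p.1}) {L M : ℝ} (hL : 0 < L) (hLM : 1 < L * M)
    (hFopen : ∀ x y, y ∈ F x → IsOpenAtPt F x y L)
    (hGopen : ∀ y x, x ∈ G y → IsOpenAtPt G y x M) {x₀ : X} {w₀ : Y}
    (hw₀ : w₀ ∈ mdiff F G x₀) : IsOpenAtPt (mdiff F G) x₀ w₀ (L - M⁻¹) := by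
  have hF : ∀ x v, v ∈ (L • ·) ⁻¹' F x → IsOpenAtPt (fun x => (L • ·) ⁻¹' F x) x v 1 :=
    fun x v hv => (isOpenAtPt_preimage_smul_iff hL).2 (by simpa using hFopen x _ hv)
  have hG : ∀ v x, x ∈ G (L • v) → IsOpenAtPt (fun v => G (L • v)) v x (L * M) :=
    fun v x hx => (hGopen _ x hx).comp_smul hL
  have h := isOpenAtPt_mdiff_of_one (F := fun x => (L • ·) ⁻¹' F x) (G := fun v => G (L • v))
    (hFcl.preimage (f := fun p : X × Y => (p.1, L • p.2)) (by fun_prop))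
    (hGcl.preimage (f := fun p : Y × X => (L • p.1, p.2)) (by fun_prop)) hLM hF hG
    (w₀ := L⁻¹ • w₀) (by rwa [mdiff_preimage_smul hL.ne', mem_preimage, smul_inv_smul₀ hL.ne'])
  rw [mdiff_preimage_smul hL.ne', isOpenAtPt_preimage_smul_iff hL, smul_inv_smul₀ hL.ne'] at h
  convert h using 1
  field_simp

end Openness

theorem stmt1_general {X Y : Type*} [NormedAddCommGroup X] [NormedSpace ℝ X] [CompleteSpace X]
    [NormedAddCommGroup Y] [NormedSpace ℝ Y] [CompleteSpace Y]
    (F : X → Set Y) (G : Y → Set X)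
    (hFcl : LocallyClosedSet {p : X × Y | p.2 ∈ F p.1})
    (hGcl : LocallyClosedSet {p : Y × X | p.2 ∈ G p.1})
    (L M : ℝ) (hL : 0 < L) (hM : 0 < M) (hLM : 1 < L * M)
    (hFopen : ∀ x y, y ∈ F x → IsOpenAtPt F x y L)
    (hGopen : ∀ y x, x ∈ G y → IsOpenAtPt G y x M) :
    (∀ x w, w ∈ mdiff F G x → IsOpenAtPt (mdiff F G) x w (L - M⁻¹)) ∧
    (∀ y v, v ∈ mdiff G F y → IsOpenAtPt (mdiff G F) y v (M - L⁻¹)) :=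
  ⟨fun _ _ hw => isOpenAtPt_mdiff hFcl hGcl hL hLM hFopen hGopen hw,
    fun _ _ hv => isOpenAtPt_mdiff hGcl hFcl hM (mul_comm L M ▸ hLM) hGopen hFopen hv⟩

/-- Ursescu's openness stability theorem. -/
theorem stmt1 {X Y : Type*} [NormedAddCommGroup X] [NormedSpace ℝ X] [CompleteSpace X]
    [NormedAddCommGroup Y] [NormedSpace ℝ Y] [CompleteSpace Y]
    (F : X → Set Y) (G : Y → Set X)
    (hFcl : LocallyClosedSet {p : X × Y | p.2 ∈ F p.1})
    (hGcl : LocallyClosedSet {p : Y × X | p.2 ∈ G p.1})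
    (hdom1 : ∃ x, (mdiff F G x).Nonempty)
    (hdom2 : ∃ y, (mdiff G F y).Nonempty)
    (L M : ℝ) (hL : 0 < L) (hM : 0 < M) (hLM : 1 < L * M)
    (hFopen : ∀ x y, y ∈ F x → IsOpenAtPt F x y L)
    (hGopen : ∀ y x, x ∈ G y → IsOpenAtPt G y x M) :
    (∀ x w, w ∈ mdiff F G x → IsOpenAtPt (mdiff F G) x w (L - M⁻¹)) ∧
    (∀ y v, v ∈ mdiff G F y → IsOpenAtPt (mdiff G F) y v (M - L⁻¹)) :=
  stmt1_general F G hFcl hGcl L M hL hM hLM hFopen hGopen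
end

section
/- Let X and Y be real Banach spaces, f : X → Y a function, G : Y ⇒ X a multifunction, L, M > 0 and (x̄,ȳ,z̄) ∈ X × Y × Y with ȳ = f(x̄) and (z̄,x̄) ∈ Gr G. Assume: (i) f is Lipschitz continuous on a neighborhood of x̄; (ii) Gr G is locally closed around (z̄,x̄), i.e. there is a neighborhood W of (z̄,x̄) such that Gr G ∩ cl W is closed; (iii) f (viewed as the multifunction x ⇒ {f(x)}) is L-open around (x̄,ȳ); (iv) G is M-open around (z̄,x̄); (v) LM > 1. Then f − G⁻¹ is (L − M⁻¹)-open around (x̄, ȳ − z̄). -/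
/-!
Given `(x, z)` in the graph of `G` and a target `w` near `f x - z`, correct `x` and `z`
alternately, as in the Lyusternik–Graves iteration. With residual `δ = ‖w + z - f x‖` and a
constant `c` slightly larger than `1/L`, openness of `f` gives `x'` with `f x' = w + z` and
`‖x' - x‖ ≤ cδ`; openness of `G` then gives `z'` with `x' ∈ G z'` and `‖z' - z‖ ≤ (c/M)δ`. The new
residual `w + z' - f x'` is `z' - z`, so residuals decay geometrically with ratio `c/M < 1` and
`x` moves by at most `cδ/(1 - c/M)`, which can be made `< ρ` exactly because `δ < ρ(L - M⁻¹)`.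
Completeness, continuity of `f` and local closedness of the graph of `G` make the limit
`(x', z')` satisfy `x' ∈ G z'` and `w = f x' - z'`.
-/

open Metric Set Filter Topology

/-- `H` is `L`-open around `(xb, yb)`: there are `ε > 0` and neighborhoods `U` of `xb`,
`V` of `yb` such that `B(y, ρL) ⊆ H(B(x, ρ))` for every `ρ ∈ (0,ε)` and every
`(x, y) ∈ Gr H ∩ (U × V)`. -/
def IsOpenAround {X Y : Type*} [NormedAddCommGroup X] [NormedAddCommGroup Y]
    (H : X → Set Y) (xb : X) (yb : Y) (L : ℝ) : Prop :=
  ∃ ε > (0 : ℝ), ∃ U ∈ 𝓝 xb, ∃ V ∈ 𝓝 yb, ∀ ρ ∈ Set.Ioo (0 : ℝ) ε, ∀ x ∈ U,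
    ∀ y ∈ H x ∩ V, ball y (ρ * L) ⊆ ⋃ x' ∈ ball x ρ, H x'

/-- The multifunction `f - G⁻¹ : X ⇒ Y`, `(f - G⁻¹)(x) = {f(x) - z : z ∈ G⁻¹(x)}`. -/
def fdiff {X Y : Type*} [SubtractionMonoid Y] (f : X → Y) (G : Y → Set X) :
    X → Set Y :=
  fun x => {w | ∃ z, x ∈ G z ∧ w = f x - z}

theorem dist_le_one_sub_pow_succ_mul {α : Type*} [PseudoMetricSpace α] {a a' a₀ : α}
    {c k δ δ₀ R : ℝ} {n : ℕ} (hc : 0 ≤ c) (hk₀ : 0 ≤ k) (hR : c * δ₀ ≤ (1 - k) * R)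
    (hδ : δ ≤ k ^ n * δ₀) (ha' : dist a' a ≤ c * δ) (ha : dist a a₀ ≤ (1 - k ^ n) * R) :
    dist a' a₀ ≤ (1 - k ^ (n + 1)) * R := by
  have hkn : 0 ≤ k ^ n := pow_nonneg hk₀ n
  calc dist a' a₀ ≤ dist a' a + dist a a₀ := dist_triangle _ _ _
    _ ≤ (1 - k ^ (n + 1)) * R := by rw [pow_succ]; nlinarith

section GeometricIteration

variable {E F : Type*} [PseudoMetricSpace E] [PseudoMetricSpace F]
  {S : Set (E × F)} {φ : E × F → ℝ} {p₀ : E × F} {c₁ c₂ k R₁ R₂ : ℝ}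

theorem exists_seq_of_geometric_step (hc₁ : 0 ≤ c₁) (hc₂ : 0 ≤ c₂) (hk₀ : 0 ≤ k) (hk : k < 1)
    (hR₁ : c₁ * φ p₀ ≤ (1 - k) * R₁) (hR₂ : c₂ * φ p₀ ≤ (1 - k) * R₂)
    (hφ : ∀ p, 0 ≤ φ p) (hp₀ : p₀ ∈ S)
    (hstep : ∀ p ∈ S ∩ closedBall p₀.1 R₁ ×ˢ closedBall p₀.2 R₂, 0 < φ p → φ p ≤ φ p₀ →
      ∃ p' ∈ S, dist p'.1 p.1 ≤ c₁ * φ p ∧ dist p'.2 p.2 ≤ c₂ * φ p ∧ φ p' ≤ k * φ p) :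
    ∃ u : ℕ → E × F, ∀ n, u n ∈ S ∩ closedBall p₀.1 R₁ ×ˢ closedBall p₀.2 R₂ ∧
      φ (u n) ≤ k ^ n * φ p₀ ∧ dist (u n) (u (n + 1)) ≤ max c₁ c₂ * φ p₀ * k ^ n := by
  set I : ℕ → E × F → Prop := fun n p => p ∈ S ∧ φ p ≤ k ^ n * φ p₀ ∧
    dist p.1 p₀.1 ≤ (1 - k ^ n) * R₁ ∧ dist p.2 p₀.2 ≤ (1 - k ^ n) * R₂
  have hkn : ∀ n, 0 ≤ k ^ n ∧ k ^ n ≤ 1 := fun n => ⟨pow_nonneg hk₀ n, pow_le_one₀ hk₀ hk.le⟩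
  have hR₁₀ : 0 ≤ R₁ := nonneg_of_mul_nonneg_right (by nlinarith [hφ p₀]) (sub_pos.2 hk)
  have hR₂₀ : 0 ≤ R₂ := nonneg_of_mul_nonneg_right (by nlinarith [hφ p₀]) (sub_pos.2 hk)
  have hI : ∀ n p, I n p → p ∈ S ∩ closedBall p₀.1 R₁ ×ˢ closedBall p₀.2 R₂ ∧ φ p ≤ φ p₀ := by
    rintro n p ⟨hpS, hφp, h₁, h₂⟩
    obtain ⟨h0, h1⟩ := hkn n
    exact ⟨⟨hpS, h₁.trans (by nlinarith), h₂.trans (by nlinarith)⟩,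
      hφp.trans (by nlinarith [hφ p₀])⟩
  have hnext : ∀ n p, I n p → ∃ p', I (n + 1) p' ∧ dist p p' ≤ max c₁ c₂ * φ p₀ * k ^ n := by
    intro n p hp
    obtain ⟨hpSK, hpφ⟩ := hI n p hp
    obtain ⟨p', hp'S, h₁, h₂, hφp'⟩ : ∃ p' ∈ S, dist p'.1 p.1 ≤ c₁ * φ p ∧
        dist p'.2 p.2 ≤ c₂ * φ p ∧ φ p' ≤ k * φ p := by
      rcases (hφ p).eq_or_lt with h | h
      · exact ⟨p, hpSK.1, by simp [← h]⟩
      · exact hstep p hpSK h hpφ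
    obtain ⟨-, hφn, hd₁, hd₂⟩ := hp
    refine ⟨p', ⟨hp'S, ?_, dist_le_one_sub_pow_succ_mul hc₁ hk₀ hR₁ hφn h₁ hd₁,
      dist_le_one_sub_pow_succ_mul hc₂ hk₀ hR₂ hφn h₂ hd₂⟩, ?_⟩
    · rw [pow_succ]; nlinarith [hφ p]
    · rw [Prod.dist_eq, dist_comm p.1, dist_comm p.2, max_mul_of_nonneg _ _ (hφ p₀),
        max_mul_of_nonneg _ _ (hkn n).1]
      have := (hkn n).1
      exact max_le_max (h₁.trans (by nlinarith)) (h₂.trans (by nlinarith))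
  choose! next hnext using hnext
  let u : ℕ → E × F := fun n => Nat.rec p₀ next n
  have hu : ∀ n, I n (u n) := by
    intro n
    induction n with
    | zero => exact show I 0 p₀ from ⟨hp₀, by simp, by simp, by simp⟩
    | succ n ih => exact (hnext n (u n) ih).1
  exact ⟨u, fun n => ⟨(hI n _ (hu n)).1, (hu n).2.1, (hnext n _ (hu n)).2⟩⟩

theorem exists_mem_eq_zero_of_geometric_step [CompleteSpace E] [CompleteSpace F]
    (hc₁ : 0 ≤ c₁) (hc₂ : 0 ≤ c₂) (hk₀ : 0 ≤ k) (hk : k < 1)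
    (hR₁ : c₁ * φ p₀ ≤ (1 - k) * R₁) (hR₂ : c₂ * φ p₀ ≤ (1 - k) * R₂)
    (hφ : ∀ p, 0 ≤ φ p) (hp₀ : p₀ ∈ S)
    (hS : IsClosed (S ∩ closedBall p₀.1 R₁ ×ˢ closedBall p₀.2 R₂))
    (hφc : ContinuousOn φ (closedBall p₀.1 R₁ ×ˢ closedBall p₀.2 R₂))
    (hstep : ∀ p ∈ S ∩ closedBall p₀.1 R₁ ×ˢ closedBall p₀.2 R₂, 0 < φ p → φ p ≤ φ p₀ →
      ∃ p' ∈ S, dist p'.1 p.1 ≤ c₁ * φ p ∧ dist p'.2 p.2 ≤ c₂ * φ p ∧ φ p' ≤ k * φ p) :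
    ∃ p ∈ S ∩ closedBall p₀.1 R₁ ×ˢ closedBall p₀.2 R₂, φ p = 0 := by
  obtain ⟨u, hu⟩ := exists_seq_of_geometric_step hc₁ hc₂ hk₀ hk hR₁ hR₂ hφ hp₀ hstep
  obtain ⟨p, hup⟩ := cauchySeq_tendsto_of_complete
    (cauchySeq_of_le_geometric k _ hk fun n => (hu n).2.2)
  have hp : p ∈ S ∩ closedBall p₀.1 R₁ ×ˢ closedBall p₀.2 R₂ :=
    hS.mem_of_tendsto hup (Eventually.of_forall fun n => (hu n).1)
  have hφp : Tendsto (φ ∘ u) atTop (𝓝 (φ p)) :=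
    (hφc p hp.2).tendsto.comp
      (tendsto_nhdsWithin_iff.2 ⟨hup, Eventually.of_forall fun n => (hu n).1.2⟩)
  have hφ0 : Tendsto (φ ∘ u) atTop (𝓝 0) := by
    refine squeeze_zero (fun n => hφ _) (fun n => (hu n).2.1) ?_
    simpa using (tendsto_pow_atTop_nhds_zero_of_lt_one hk₀ hk).mul_const (φ p₀)
  exact ⟨p, hp, tendsto_nhds_unique hφp hφ0⟩

end GeometricIteration

theorem IsOpenAround.exists_ball {X Y : Type*} [NormedAddCommGroup X] [NormedAddCommGroup Y]
    {H : X → Set Y} {xb : X} {yb : Y} {L : ℝ} (h : IsOpenAround H xb yb L) :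
    ∃ ε > (0 : ℝ), ∃ r > (0 : ℝ), ∀ ρ ∈ Ioo (0 : ℝ) ε, ∀ x ∈ ball xb r,
      ∀ y ∈ H x ∩ ball yb r, ball y (ρ * L) ⊆ ⋃ x' ∈ ball x ρ, H x' := by
  obtain ⟨ε, hε, U, hU, V, hV, hopen⟩ := h
  obtain ⟨r₁, hr₁, hr₁U⟩ := Metric.mem_nhds_iff.1 hU
  obtain ⟨r₂, hr₂, hr₂V⟩ := Metric.mem_nhds_iff.1 hV
  refine ⟨ε, hε, min r₁ r₂, lt_min hr₁ hr₂, fun ρ hρ x hx y hy => hopen ρ hρ x ?_ y ⟨hy.1, ?_⟩⟩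
  · exact hr₁U (ball_subset_ball (min_le_left _ _) hx)
  · exact hr₂V (ball_subset_ball (min_le_right _ _) hy.2)

theorem exists_isClosed_graph_inter_closedBall {X Y : Type*} [PseudoMetricSpace X]
    [PseudoMetricSpace Y] {G : Y → Set X} {xb : X} {zb : Y}
    (h : ∃ W ∈ 𝓝 (zb, xb), IsClosed ({p : Y × X | p.2 ∈ G p.1} ∩ closure W)) :
    ∃ r₀ > 0, ∀ r < r₀,
      IsClosed ({p : X × Y | p.1 ∈ G p.2} ∩ closedBall xb r ×ˢ closedBall zb r) := by
  obtain ⟨W, hW, hWc⟩ := h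
  obtain ⟨r₀, hr₀, hr₀W⟩ := Metric.mem_nhds_iff.1 hW
  refine ⟨r₀, hr₀, fun r hr => ?_⟩
  have hbox : closedBall xb r ×ˢ closedBall zb r ⊆ Prod.swap ⁻¹' W := fun p hp =>
    hr₀W (closedBall_subset_ball hr (by simpa [← closedBall_prod_same, and_comm] using hp))
  convert (hWc.preimage continuous_swap).inter
    (isClosed_closedBall.prod isClosed_closedBall :
      IsClosed (closedBall xb r ×ˢ closedBall zb r)) using 1
  ext p
  exact ⟨fun hp => ⟨⟨hp.1, subset_closure (hbox hp.2)⟩, hp.2⟩, fun hp => ⟨hp.1.1, hp.2⟩⟩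

theorem IsClosed.inter_of_subset {α : Type*} [TopologicalSpace α] {s t u : Set α}
    (h : IsClosed (s ∩ t)) (hu : IsClosed u) (hut : u ⊆ t) : IsClosed (s ∩ u) := by
  simpa only [inter_assoc, inter_eq_right.2 hut] using h.inter hu

theorem exists_step_constant {δ ρ L M : ℝ} (hρ : 0 < ρ) (hM : 0 < M) (hδ : 0 ≤ δ)
    (h : δ + ρ / M < ρ * L) :
    ∃ c R, 0 < c ∧ 1 < c * L ∧ c / M < 1 ∧ c * δ ≤ (1 - c / M) * R ∧ R < ρ := by
  have hpos : 0 < δ + ρ / M := by positivity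
  have hL : 0 < L := pos_of_mul_pos_right (hpos.trans h) hρ.le
  obtain ⟨c, hLc, hc⟩ : ∃ c, L⁻¹ < c ∧ c < ρ / (δ + ρ / M) :=
    exists_between (by rw [lt_div_iff₀ hpos, inv_mul_lt_iff₀ hL]; linarith)
  have hc₀ : 0 < c := (inv_pos.2 hL).trans hLc
  rw [lt_div_iff₀ hpos] at hc
  have hk : c / M < 1 := by
    rw [div_lt_one hM]
    nlinarith [mul_div_cancel₀ ρ hM.ne']
  have h1k : 0 < 1 - c / M := sub_pos.2 hk
  refine ⟨c, c * δ / (1 - c / M), hc₀, (inv_lt_iff_one_lt_mul₀ hL).1 hLc, hk,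
    (mul_div_cancel₀ _ h1k.ne').ge, (div_lt_iff₀ h1k).2 ?_⟩
  linarith [mul_add c δ (ρ / M), show ρ * (1 - c / M) = ρ - c * (ρ / M) by ring]

section Iteration

variable {X Y : Type*} [NormedAddCommGroup X] [NormedAddCommGroup Y]
  {f : X → Y} {G : Y → Set X} {L M ρ c : ℝ} {x : X} {z : Y}

theorem exists_fdiff_step
    (hf : ∀ t ∈ Ioo 0 ρ, ∀ x' ∈ ball x ρ, ball (f x') (t * L) ⊆ f '' ball x' t)
    (hG : ∀ t ∈ Ioo 0 (ρ / M), ∀ z' ∈ ball z (ρ / M), ∀ x' ∈ G z' ∩ ball x ρ,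
      ball x' (t * M) ⊆ ⋃ z'' ∈ ball z' t, G z'')
    (hM : 0 < M) (hc₀ : 0 < c) (hc : 1 < c * L) {x₁ : X} {z₁ w : Y} (h₁ : x₁ ∈ G z₁)
    (hx₁ : x₁ ∈ ball x ρ) (hz₁ : z₁ ∈ ball z (ρ / M)) (hδ : 0 < dist (w + z₁) (f x₁))
    (hδρ : c * dist (w + z₁) (f x₁) < ρ) :
    ∃ x₂ z₂, x₂ ∈ G z₂ ∧ dist x₂ x₁ ≤ c * dist (w + z₁) (f x₁) ∧
      dist z₂ z₁ ≤ c / M * dist (w + z₁) (f x₁) ∧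
      dist (w + z₂) (f x₂) ≤ c / M * dist (w + z₁) (f x₁) := by
  set δ := dist (w + z₁) (f x₁)
  have hcδ : 0 < c * δ := mul_pos hc₀ hδ
  have hw : w + z₁ ∈ ball (f x₁) (c * δ * L) := by
    rw [mem_ball, mul_right_comm]; exact lt_mul_of_one_lt_left hδ hc
  obtain ⟨x₂, hx₂, hfx₂⟩ := hf _ ⟨hcδ, hδρ⟩ x₁ hx₁ hw
  have ht : c / M * δ ∈ Ioo 0 (ρ / M) := by
    rw [div_mul_eq_mul_div]
    exact ⟨div_pos hcδ hM, div_lt_div_of_pos_right hδρ hM⟩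
  have hx₂' : x₂ ∈ ball x₁ (c / M * δ * M) := by
    rwa [div_mul_eq_mul_div, div_mul_cancel₀ _ hM.ne']
  obtain ⟨z₂, hz₂, hx₂z₂⟩ := mem_iUnion₂.1 (hG _ ht z₁ hz₁ x₁ ⟨h₁, hx₁⟩ hx₂')
  have hres : dist (w + z₂) (f x₂) = dist z₂ z₁ := by rw [hfx₂, dist_add_left]
  exact ⟨x₂, z₂, hx₂z₂, (mem_ball.1 hx₂).le, (mem_ball.1 hz₂).le, hres ▸ (mem_ball.1 hz₂).le⟩

theorem ball_subset_biUnion_fdiff [CompleteSpace X] [CompleteSpace Y] (hM : 0 < M) (hρ : 0 < ρ)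
    (hxz : x ∈ G z)
    (hf : ∀ t ∈ Ioo 0 ρ, ∀ x' ∈ ball x ρ, ball (f x') (t * L) ⊆ f '' ball x' t)
    (hG : ∀ t ∈ Ioo 0 (ρ / M), ∀ z' ∈ ball z (ρ / M), ∀ x' ∈ G z' ∩ ball x ρ,
      ball x' (t * M) ⊆ ⋃ z'' ∈ ball z' t, G z'')
    (hfc : ContinuousOn f (ball x ρ))
    (hGc : IsClosed ({p : X × Y | p.1 ∈ G p.2} ∩ closedBall x ρ ×ˢ closedBall z (ρ / M))) :
    ball (f x - z) (ρ * (L - M⁻¹)) ⊆ ⋃ x' ∈ ball x ρ, fdiff f G x' := by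
  intro w hw
  set φ : X × Y → ℝ := fun p => dist (w + p.2) (f p.1) with hφ_def
  have hδ : φ (x, z) + ρ / M < ρ * L := by
    have : φ (x, z) = dist w (f x - z) := by simp only [hφ_def, dist_eq_norm]; abel_nf
    rw [mem_ball] at hw
    rw [this, div_eq_mul_inv]; linarith
  obtain ⟨c, R, hc₀, hcL, hk, hR, hRρ⟩ := exists_step_constant hρ hM dist_nonneg hδ
  have hRM : c / M * φ (x, z) ≤ (1 - c / M) * (R / M) := by
    rw [mul_div_assoc', div_mul_eq_mul_div, div_le_div_iff_of_pos_right hM]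
    exact hR
  have hRx : closedBall x R ⊆ ball x ρ := closedBall_subset_ball hRρ
  have hRz : closedBall z (R / M) ⊆ ball z (ρ / M) :=
    closedBall_subset_ball (div_lt_div_of_pos_right hRρ hM)
  have hstep : ∀ p ∈ {p : X × Y | p.1 ∈ G p.2} ∩ closedBall x R ×ˢ closedBall z (R / M),
      0 < φ p → φ p ≤ φ (x, z) → ∃ p' ∈ {p : X × Y | p.1 ∈ G p.2},
        dist p'.1 p.1 ≤ c * φ p ∧ dist p'.2 p.2 ≤ c / M * φ p ∧ φ p' ≤ c / M * φ p := by
    rintro ⟨x₁, z₁⟩ ⟨hx₁z₁, hx₁, hz₁⟩ hpos hle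
    have hcρ' : c * φ (x₁, z₁) < ρ := by
      nlinarith [mul_le_mul_of_nonneg_left hle hc₀.le, div_pos hc₀ hM]
    obtain ⟨x₂, z₂, h⟩ := exists_fdiff_step hf hG hM hc₀ hcL hx₁z₁ (hRx hx₁) (hRz hz₁) hpos hcρ'
    exact ⟨(x₂, z₂), h⟩
  have hcont : ContinuousOn φ (closedBall x R ×ˢ closedBall z (R / M)) :=
    continuous_dist.comp_continuousOn <| (continuous_const.add continuous_snd).continuousOn.prodMk
      (hfc.comp continuousOn_fst fun p hp => hRx hp.1)
  obtain ⟨⟨x', z'⟩, ⟨hx'z', hx', -⟩, hφ'⟩ := exists_mem_eq_zero_of_geometric_step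
    (p₀ := (x, z)) hc₀.le (by positivity) (by positivity) hk hR hRM (fun p => dist_nonneg) hxz
    (hGc.inter_of_subset (isClosed_closedBall.prod isClosed_closedBall)
      (prod_mono (hRx.trans ball_subset_closedBall) (hRz.trans ball_subset_closedBall)))
    hcont hstep
  refine mem_iUnion₂.2 ⟨x', hRx hx', z', hx'z', ?_⟩
  rw [eq_sub_iff_add_eq]
  exact dist_eq_zero.1 hφ'

theorem isOpenAround_fdiff_of_forall_ball [CompleteSpace X] [CompleteSpace Y] {xb : X} {zb : Y}
    {εf εG r : ℝ} (hM : 0 < M) (hεf : 0 < εf) (hεG : 0 < εG) (hr : 0 < r)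
    (hf : ∀ t ∈ Ioo 0 εf, ∀ x ∈ ball xb r, ball (f x) (t * L) ⊆ f '' ball x t)
    (hG : ∀ t ∈ Ioo 0 εG, ∀ z ∈ ball zb r, ∀ x ∈ G z ∩ ball xb r,
      ball x (t * M) ⊆ ⋃ z' ∈ ball z t, G z')
    (hfc : ContinuousOn f (ball xb r))
    (hGc : IsClosed ({p : X × Y | p.1 ∈ G p.2} ∩ closedBall xb r ×ˢ closedBall zb r)) :
    IsOpenAround (fdiff f G) xb (f xb - zb) (L - M⁻¹) := by
  have hfxb : f ⁻¹' ball (f xb) (r / 4) ∈ 𝓝 xb :=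
    (hfc.continuousAt (ball_mem_nhds _ hr)).preimage_mem_nhds (ball_mem_nhds _ (by positivity))
  refine ⟨min (min εf (M * εG)) (min (r / 2) (M * (r / 2))), by positivity,
    ball xb (r / 2) ∩ f ⁻¹' ball (f xb) (r / 4), inter_mem (ball_mem_nhds _ (by positivity)) hfxb,
    ball (f xb - zb) (r / 4), ball_mem_nhds _ (by positivity), ?_⟩
  rintro ρ ⟨hρ, hρε⟩ x ⟨hx, hfx⟩ _ ⟨⟨z, hxz, rfl⟩, hz⟩
  simp only [lt_min_iff] at hρε
  obtain ⟨⟨hρεf, hρεG⟩, hρr, hρrM⟩ := hρε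
  rw [← div_lt_iff₀' hM] at hρεG hρrM
  have hzzb : dist z zb < r / 2 := by
    have := dist_sub_sub_le (f x) (f x - z) (f xb) (f xb - zb)
    rw [sub_sub_cancel, sub_sub_cancel] at this
    linarith [mem_ball.1 hfx, mem_ball.1 hz]
  have hxρ : closedBall x ρ ⊆ ball xb r := closedBall_subset_ball' (by linarith [mem_ball.1 hx])
  have hzρ : closedBall z (ρ / M) ⊆ ball zb r := closedBall_subset_ball' (by linarith)
  apply ball_subset_biUnion_fdiff hM hρ hxz
  · exact fun t ht x' hx' => hf t ⟨ht.1, ht.2.trans hρεf⟩ x' (hxρ (ball_subset_closedBall hx'))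
  · exact fun t ht z' hz' x' hx' => hG t ⟨ht.1, ht.2.trans hρεG⟩ z'
      (hzρ (ball_subset_closedBall hz')) x' ⟨hx'.1, hxρ (ball_subset_closedBall hx'.2)⟩
  · exact hfc.mono (ball_subset_closedBall.trans hxρ)
  · exact hGc.inter_of_subset (isClosed_closedBall.prod isClosed_closedBall)
      (prod_mono (hxρ.trans ball_subset_closedBall) (hzρ.trans ball_subset_closedBall))

end Iteration

theorem stmt4_general {X Y : Type*} [NormedAddCommGroup X] [CompleteSpace X]
    [NormedAddCommGroup Y] [CompleteSpace Y]
    (f : X → Y) (G : Y → Set X) (L M : ℝ) (hM : 0 < M)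
    (xb : X) (yb zb : Y) (hyb : yb = f xb)
    (hlip : ∃ l > (0 : ℝ), ∃ U ∈ 𝓝 xb, ∀ x ∈ U, ∀ x' ∈ U,
      ‖f x - f x'‖ ≤ l * ‖x - x'‖)
    (hGcl : ∃ W ∈ 𝓝 (zb, xb), IsClosed ({p : Y × X | p.2 ∈ G p.1} ∩ closure W))
    (hfopen : IsOpenAround (fun x => {f x}) xb yb L)
    (hGopen : IsOpenAround G zb xb M) :
    IsOpenAround (fdiff f G) xb (yb - zb) (L - M⁻¹) := by
  subst hyb
  obtain ⟨εf, hεf, rf, hrf, hfo⟩ := hfopen.exists_ball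
  obtain ⟨εG, hεG, rG, hrG, hGo⟩ := hGopen.exists_ball
  obtain ⟨rW, hrW, hGc⟩ := exists_isClosed_graph_inter_closedBall hGcl
  obtain ⟨l, -, U, hU, hlipU⟩ := hlip
  have hfc : ContinuousOn f U :=
    (LipschitzOnWith.of_dist_le' (by simpa only [dist_eq_norm] using hlipU)).continuousOn
  obtain ⟨r₁, hr₁, hr₁U⟩ := Metric.mem_nhds_iff.1
    (inter_mem hU ((hfc.continuousAt hU).preimage_mem_nhds (ball_mem_nhds _ hrf)))
  set r := min (min r₁ rf) (min rG (rW / 2))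
  have hrr₁ : r ≤ r₁ := (min_le_left _ _).trans (min_le_left _ _)
  have hrrf : r ≤ rf := (min_le_left _ _).trans (min_le_right _ _)
  have hrrG : r ≤ rG := (min_le_right _ _).trans (min_le_left _ _)
  have hrrW : r < rW := ((min_le_right _ _).trans (min_le_right _ _)).trans_lt (by linarith)
  refine isOpenAround_fdiff_of_forall_ball (r := r) hM hεf hεG (by positivity) ?_ ?_
    (hfc.mono fun x hx => (hr₁U (ball_subset_ball hrr₁ hx)).1) (hGc r hrrW)
  · intro t ht x hx
    rw [image_eq_iUnion]
    exact hfo t ht x (ball_subset_ball hrrf hx) (f x) ⟨rfl, (hr₁U (ball_subset_ball hrr₁ hx)).2⟩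
  · exact fun t ht z hz x hx =>
      hGo t ht z (ball_subset_ball hrrG hz) x ⟨hx.1, ball_subset_ball hrrG hx.2⟩

/-- openness of `f - G⁻¹` around the reference point. -/
theorem stmt4 {X Y : Type*} [NormedAddCommGroup X] [NormedSpace ℝ X] [CompleteSpace X]
    [NormedAddCommGroup Y] [NormedSpace ℝ Y] [CompleteSpace Y]
    (f : X → Y) (G : Y → Set X) (L M : ℝ) (hL : 0 < L) (hM : 0 < M)
    (xb : X) (yb zb : Y) (hyb : yb = f xb) (hG : xb ∈ G zb)
    (hlip : ∃ l > (0 : ℝ), ∃ U ∈ 𝓝 xb, ∀ x ∈ U, ∀ x' ∈ U,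
      ‖f x - f x'‖ ≤ l * ‖x - x'‖)
    (hGcl : ∃ W ∈ 𝓝 (zb, xb), IsClosed ({p : Y × X | p.2 ∈ G p.1} ∩ closure W))
    (hfopen : IsOpenAround (fun x => {f x}) xb yb L)
    (hGopen : IsOpenAround G zb xb M)
    (hLM : 1 < L * M) :
    IsOpenAround (fdiff f G) xb (yb - zb) (L - M⁻¹) :=
  stmt4_general f G L M hM xb yb zb hyb hlip hGcl hfopen hGopen
end

section
/- Let X, P, Y be real Banach spaces, f : X × P → Y a function continuous on a neighborhood of (x̄,p̄), and A : P → Y a surjective continuous linear operator. Let α > 0 and c > α be such that B_Y(0, cρ) ⊆ A(B_P(0,ρ)) for every ρ > 0, and suppose there are neighborhoods U of p̄ and V of x̄ such that ‖f(x,p) − f(x,p′) − A(p − p′)‖ ≤ α‖p − p′‖ for every p,p′ ∈ U and every x ∈ V. Then f is (c − α)-open with respect to p uniformly in x around ((x̄,p̄), f(x̄,p̄)). -/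
/-! Graves' theorem with a parameter. A right inverse of `A` with norm at most `1 / c'`,
`α < c' < c`, exists by the covering property of `A`; with it, the Newton-type iteration
`q ↦ q + A⁻¹ (y - f (x, q))` contracts the residual by the factor `α / c'` and stays in the ball
where `f (x, ·)` is `α`-close to `A`, hence Lipschitz, so it converges to a solution of
`f (x, q) = y` at distance at most `‖y - f (x, p)‖ / (c' - α)` from `p`. Since the
approximation constant does not depend on `x`, neither do the radii. -/

open Metric Set Filter Topology
open scoped NNReal

section

variable {𝕜 : Type*} [NontriviallyNormedField 𝕜]
  {E : Type*} [NormedAddCommGroup E] [NormedSpace 𝕜 E]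
  {F : Type*} [NormedAddCommGroup F] [NormedSpace 𝕜 F]
  {A : E →L[𝕜] F} {c : ℝ}

namespace ContinuousLinearMap

theorem exists_preimage_norm_le_of_ball_subset_image
    (hA : ∀ ρ > (0 : ℝ), ball (0 : F) (c * ρ) ⊆ A '' ball (0 : E) ρ)
    {c' : ℝ} (hc' : 0 < c') (hc'c : c' < c) (y : F) :
    ∃ u, A u = y ∧ c' * ‖u‖ ≤ ‖y‖ := by
  rcases eq_or_ne y 0 with rfl | hy
  · exact ⟨0, map_zero A, by simp⟩
  have hρ : 0 < ‖y‖ / c' := div_pos (norm_pos_iff.mpr hy) hc'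
  have hy_mem : y ∈ ball (0 : F) (c * (‖y‖ / c')) := by
    rw [mem_ball_zero_iff, mul_div_assoc', lt_div_iff₀ hc']
    exact mul_lt_mul_of_pos_right hc'c (norm_pos_iff.mpr hy) |>.trans_eq' (mul_comm _ _)
  obtain ⟨u, hu, rfl⟩ := hA _ hρ hy_mem
  refine ⟨u, rfl, ?_⟩
  rw [mem_ball_zero_iff, lt_div_iff₀ hc'] at hu
  linarith

theorem exists_nonlinearRightInverse_nnnorm_eq_inv
    (hA : ∀ ρ > (0 : ℝ), ball (0 : F) (c * ρ) ⊆ A '' ball (0 : E) ρ)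
    {c' : ℝ} (hc' : 0 < c') (hc'c : c' < c) :
    ∃ g : A.NonlinearRightInverse, (g.nnnorm : ℝ) = c'⁻¹ := by
  choose u hAu hu using A.exists_preimage_norm_le_of_ball_subset_image hA hc' hc'c
  refine ⟨⟨u, ⟨c'⁻¹, inv_nonneg.mpr hc'.le⟩, fun y => ?_, hAu⟩, rfl⟩
  change ‖u y‖ ≤ c'⁻¹ * ‖y‖
  rw [inv_mul_eq_div, le_div_iff₀' hc']
  exact hu y

end ContinuousLinearMap

namespace ApproximatesLinearOn

theorem closedBall_subset_image_closedBall [CompleteSpace E]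
    {g : E → F} {s : Set E} {α : ℝ≥0} (hg : ApproximatesLinearOn g A s α)
    (hA : ∀ ρ > (0 : ℝ), ball (0 : F) (c * ρ) ⊆ A '' ball (0 : E) ρ)
    {c' : ℝ} (hc' : 0 < c') (hc'c : c' < c) {p : E} {ρ : ℝ} (hρ : 0 ≤ ρ)
    (hs : closedBall p ρ ⊆ s) :
    closedBall (g p) (ρ * (c' - α)) ⊆ g '' closedBall p ρ := by
  obtain ⟨h, hh⟩ := A.exists_nonlinearRightInverse_nnnorm_eq_inv hA hc' hc'c
  have := hg.surjOn_closedBall_of_nonlinearRightInverse h hρ hs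
  rwa [hh, inv_inv, mul_comm] at this

theorem ball_subset_image_ball [CompleteSpace E]
    {g : E → F} {s : Set E} {α : ℝ≥0} (hg : ApproximatesLinearOn g A s α)
    (hA : ∀ ρ > (0 : ℝ), ball (0 : F) (c * ρ) ⊆ A '' ball (0 : E) ρ)
    (hαc : (α : ℝ) < c) {p : E} {ρ : ℝ} (hs : ball p ρ ⊆ s) :
    ball (g p) (ρ * (c - α)) ⊆ g '' ball p ρ := by
  intro y hy
  have hρ : 0 < ρ := (pos_iff_pos_of_mul_pos (pos_of_mem_ball hy)).mpr (sub_pos.mpr hαc)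
  have hy : dist y (g p) < ρ * (c - α) := hy
  have hd : dist y (g p) / ρ + α < c := by
    rw [div_add' _ _ _ hρ.ne', div_lt_iff₀ hρ]
    linarith
  obtain ⟨c', hc'd, hc'c⟩ := exists_between hd
  have hc'α : 0 < c' - α := by
    have : 0 ≤ dist y (g p) / ρ := by positivity
    linarith
  have hd' : dist y (g p) / (c' - α) < ρ := by
    rw [div_lt_iff₀ hc'α]
    rw [← lt_sub_iff_add_lt, div_lt_iff₀ hρ] at hc'd
    linarith
  obtain ⟨ρ', hρ'd, hρ'ρ⟩ := exists_between hd'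
  have hρ' : 0 ≤ ρ' := (div_nonneg dist_nonneg hc'α.le).trans hρ'd.le
  have hy' : y ∈ closedBall (g p) (ρ' * (c' - α)) := by
    rw [div_lt_iff₀ hc'α] at hρ'd
    exact mem_closedBall.mpr hρ'd.le
  have hsub : closedBall p ρ' ⊆ ball p ρ := closedBall_subset_ball hρ'ρ
  exact image_mono hsub <| hg.closedBall_subset_image_closedBall hA
    (by linarith [α.coe_nonneg]) hc'c hρ' (hsub.trans hs) hy'

end ApproximatesLinearOn

end

theorem stmt5_general {X P Y : Type*}
    [NormedAddCommGroup X] [NormedSpace ℝ X] [CompleteSpace X]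
    [NormedAddCommGroup P] [NormedSpace ℝ P] [CompleteSpace P]
    [NormedAddCommGroup Y] [NormedSpace ℝ Y] [CompleteSpace Y]
    (f : X × P → Y) (xb : X) (pb : P)
    (A : P →L[ℝ] Y)
    (α c : ℝ) (hα : 0 < α) (hc : α < c)
    (hA : ∀ ρ > (0 : ℝ), ball (0 : Y) (c * ρ) ⊆ A '' ball (0 : P) ρ)
    (happrox : ∃ U ∈ 𝓝 pb, ∃ V ∈ 𝓝 xb, ∀ p ∈ U, ∀ p' ∈ U, ∀ x ∈ V,
      ‖f (x, p) - f (x, p') - A (p - p')‖ ≤ α * ‖p - p'‖) :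
    ∃ ε > (0 : ℝ), ∃ U ∈ 𝓝 xb, ∃ V ∈ 𝓝 pb, ∃ W ∈ 𝓝 (f (xb, pb)),
      ∀ ρ ∈ Set.Ioo (0 : ℝ) ε, ∀ x ∈ U, ∀ p ∈ V, f (x, p) ∈ W →
        ball (f (x, p)) (ρ * (c - α)) ⊆ (fun q => f (x, q)) '' ball p ρ := by
  obtain ⟨U, hU, V, hV, happrox⟩ := happrox
  obtain ⟨r, hr, hrU⟩ := Metric.mem_nhds_iff.mp hU
  refine ⟨r / 2, half_pos hr, V, hV, ball pb (r / 2), ball_mem_nhds _ (half_pos hr),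
    univ, univ_mem, ?_⟩
  rintro ρ ⟨-, hρ⟩ x hx p hp -
  lift α to ℝ≥0 using hα.le
  have hg : ApproximatesLinearOn (fun q => f (x, q)) A U α := fun q hq q' hq' =>
    happrox q hq q' hq' x hx
  have hball : ball p ρ ⊆ U :=
    (ball_subset_ball' (by linarith [mem_ball.mp hp])).trans hrU
  exact hg.ball_subset_image_ball hA hc hball

/-- a parametric Graves-type theorem. If `A : P → Y` is a surjective
continuous linear operator with `B(0, cρ) ⊆ A(B(0,ρ))` for all `ρ > 0`, `0 < α < c`,
and `‖f(x,p) - f(x,p') - A(p - p')‖ ≤ α‖p - p'‖` near the reference point, then `f` is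
`(c - α)`-open with respect to `p` uniformly in `x` around `((xb,pb), f(xb,pb))`. -/
theorem stmt5 {X P Y : Type*}
    [NormedAddCommGroup X] [NormedSpace ℝ X] [CompleteSpace X]
    [NormedAddCommGroup P] [NormedSpace ℝ P] [CompleteSpace P]
    [NormedAddCommGroup Y] [NormedSpace ℝ Y] [CompleteSpace Y]
    (f : X × P → Y) (xb : X) (pb : P)
    (hcont : ∃ N ∈ 𝓝 (xb, pb), ContinuousOn f N)
    (A : P →L[ℝ] Y) (hsurj : Function.Surjective A)
    (α c : ℝ) (hα : 0 < α) (hc : α < c)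
    (hA : ∀ ρ > (0 : ℝ), ball (0 : Y) (c * ρ) ⊆ A '' ball (0 : P) ρ)
    (happrox : ∃ U ∈ 𝓝 pb, ∃ V ∈ 𝓝 xb, ∀ p ∈ U, ∀ p' ∈ U, ∀ x ∈ V,
      ‖f (x, p) - f (x, p') - A (p - p')‖ ≤ α * ‖p - p'‖) :
    ∃ ε > (0 : ℝ), ∃ U ∈ 𝓝 xb, ∃ V ∈ 𝓝 pb, ∃ W ∈ 𝓝 (f (xb, pb)),
      ∀ ρ ∈ Set.Ioo (0 : ℝ) ε, ∀ x ∈ U, ∀ p ∈ V, f (x, p) ∈ W →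
        ball (f (x, p)) (ρ * (c - α)) ⊆ (fun q => f (x, q)) '' ball p ρ :=
  stmt5_general f xb pb A α c hα hc hA happrox
end

section
/- Let X, Y, P be real Banach spaces, H : X × P ⇒ Y a multifunction with 0 ∈ H(x̄,p̄), and S : P ⇒ X its implicit multifunction S(p) = {x ∈ X : 0 ∈ H(x,p)}. Suppose H is inner semicontinuous at ((x̄,p̄),0) and H is open with linear rate c > 0 with respect to x uniformly in p around ((x̄,p̄),0). Then there exist r̄, t̄ > 0 such that d(x, S(p)) ≤ c⁻¹ d(0, H(x,p)) for every (x,p) ∈ B(x̄,r̄) × B(p̄,t̄). If, moreover, H is Lipschitz-like with respect to p uniformly in x around ((x̄,p̄),0) with constant l > 0, then there exist neighborhoods V of p̄ and U of x̄ such that d(x, S(p₂)) ≤ c⁻¹ l ‖p₁ − p₂‖ for every p₁,p₂ ∈ V and every x ∈ S(p₁) ∩ U; in particular S is Lipschitz-like around (p̄,x̄) with any constant λ > c⁻¹ l. -/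
open Metric Set Filter Topology Pointwise

/-- Inner semicontinuity of a multifunction `H : α ⇒ Y` at `(a, y)`. -/
def InnerSemicontinuousAt {α Y : Type*} [TopologicalSpace α] [TopologicalSpace Y]
    (H : α → Set Y) (a : α) (y : Y) : Prop :=
  ∀ D : Set Y, IsOpen D → y ∈ D → ∃ U ∈ 𝓝 a, ∀ b ∈ U, (H b ∩ D).Nonempty

/-- `H : X × P ⇒ Y` is `c`-open with respect to `x` uniformly in `p`
around `((xb, pb), yb)`. -/
def OpenWrtXUnifP {X P Y : Type*} [NormedAddCommGroup X] [NormedAddCommGroup P]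
    [NormedAddCommGroup Y] (H : X × P → Set Y) (xb : X) (pb : P) (yb : Y)
    (c : ℝ) : Prop :=
  ∃ ε > (0 : ℝ), ∃ U ∈ 𝓝 xb, ∃ V ∈ 𝓝 pb, ∃ W ∈ 𝓝 yb,
    ∀ ρ ∈ Set.Ioo (0 : ℝ) ε, ∀ p ∈ V, ∀ x ∈ U, ∀ y ∈ H (x, p) ∩ W,
      ball y (ρ * c) ⊆ ⋃ x' ∈ ball x ρ, H (x', p)

/-- `H : X × P ⇒ Y` is Lipschitz-like with respect to `p` uniformly in `x`
around `((xb, pb), yb)` with constant `l`. -/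
def LipschitzLikeWrtPUnifX {X P Y : Type*} [NormedAddCommGroup X]
    [NormedAddCommGroup P] [NormedAddCommGroup Y] (H : X × P → Set Y)
    (xb : X) (pb : P) (yb : Y) (l : ℝ) : Prop :=
  ∃ U ∈ 𝓝 xb, ∃ V ∈ 𝓝 pb, ∃ W ∈ 𝓝 yb, ∀ x ∈ U, ∀ p ∈ V, ∀ q ∈ V,
    H (x, p) ∩ W ⊆ H (x, q) + closedBall (0 : Y) (l * ‖p - q‖)

/-- `S : P ⇒ X` is Lipschitz-like around `(pb, xb)` with constant `lam`. -/
def LipschitzLikeAround {P X : Type*} [NormedAddCommGroup P] [NormedAddCommGroup X]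
    (S : P → Set X) (pb : P) (xb : X) (lam : ℝ) : Prop :=
  ∃ V ∈ 𝓝 pb, ∃ U ∈ 𝓝 xb, ∀ p ∈ V, ∀ q ∈ V,
    S p ∩ U ⊆ S q + closedBall (0 : X) (lam * ‖p - q‖)

/-!
If `y ∈ H(x, p)` is close to `0`, openness of `H(·, p)` at `(x, y)` with linear rate `c` puts `0`
into `H(x', p)` for some `x'` within `‖y‖ / c` (up to any slack) of `x`, so
`d(x, S(p)) ≤ c⁻¹ d(0, H(x, p))`; inner semicontinuity guarantees that such `y` exist for all
`(x, p)` near `(xb, pb)`. The Lipschitz-like property in `p` bounds `d(0, H(x, p₂))` by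
`l ‖p₁ - p₂‖` whenever `0 ∈ H(x, p₁)`, and the error bound turns this into the Lipschitz
estimate for `S`.
-/

theorem infEDist_le_of_mem_add_closedBall {Y : Type*} [SeminormedAddCommGroup Y] {s : Set Y}
    {y : Y} {r : ℝ} (hr : 0 ≤ r) (h : y ∈ s + closedBall 0 r) :
    infEDist y s ≤ ENNReal.ofReal r := by
  obtain ⟨z, hz, w, hw, rfl⟩ := h
  calc infEDist (z + w) s ≤ edist (z + w) z := infEDist_le_edist_of_mem hz
    _ ≤ ENNReal.ofReal r := by
      rw [edist_le_ofReal hr, dist_eq_norm, add_sub_cancel_left]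
      exact mem_closedBall_zero_iff.mp hw

theorem infEDist_le_inv_mul_infEDist_of_forall_lt {X Y : Type*} [PseudoMetricSpace X]
    [SeminormedAddCommGroup Y] {A : Set X} {B : Set Y} {x : X} {c m : ℝ}
    (hc : 0 < c) (hrate : ∀ ρ ∈ Ioo 0 m, ∀ y ∈ B, ‖y‖ < ρ * c → ∃ x' ∈ A, dist x x' < ρ)
    (hB : infEDist 0 B < ENNReal.ofReal (m * c)) :
    infEDist x A ≤ ENNReal.ofReal c⁻¹ * infEDist 0 B := by
  set d := (infEDist 0 B).toReal
  have hd : infEDist 0 B = ENNReal.ofReal d := (ENNReal.ofReal_toReal hB.ne_top).symm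
  have hdm : c⁻¹ * d < m := by
    rw [hd] at hB
    rw [inv_mul_lt_iff₀ hc, mul_comm]
    exact (ENNReal.ofReal_lt_ofReal_iff'.mp hB).1
  have hle : ∀ ρ ∈ Ioo (c⁻¹ * d) m, infEDist x A ≤ ENNReal.ofReal ρ := by
    rintro ρ ⟨hdρ, hρm⟩
    have hρ : 0 < ρ := lt_of_le_of_lt (by positivity) hdρ
    have hB' : infEDist 0 B < ENNReal.ofReal (ρ * c) := by
      rw [hd, ENNReal.ofReal_lt_ofReal_iff (by positivity)]
      rwa [inv_mul_lt_iff₀ hc, mul_comm] at hdρ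
    obtain ⟨y, hyB, hy⟩ := infEDist_lt_iff.mp hB'
    rw [edist_lt_ofReal, dist_zero_left] at hy
    obtain ⟨x', hx'A, hx'⟩ := hrate ρ ⟨hρ, hρm⟩ y hyB hy
    exact (infEDist_le_edist_of_mem hx'A).trans ((edist_le_ofReal hρ.le).mpr hx'.le)
  rw [hd, ← ENNReal.ofReal_mul (by positivity)]
  exact ge_of_tendsto ((ENNReal.continuous_ofReal.tendsto _).mono_left nhdsWithin_le_nhds)
    (eventually_of_mem (Ioo_mem_nhdsGT hdm) hle)

theorem InnerSemicontinuousAt.eventually_infEDist_lt {α Y : Type*} [TopologicalSpace α]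
    [PseudoMetricSpace Y] {H : α → Set Y} {a : α} {y : Y} (h : InnerSemicontinuousAt H a y)
    {δ : ℝ} (hδ : 0 < δ) : ∀ᶠ b in 𝓝 a, infEDist y (H b) < ENNReal.ofReal δ := by
  obtain ⟨U, hU, hmeet⟩ := h (ball y δ) isOpen_ball (mem_ball_self hδ)
  filter_upwards [hU] with b hb
  obtain ⟨z, hzH, hz⟩ := hmeet b hb
  exact infEDist_lt_iff.mpr ⟨z, hzH, edist_lt_ofReal.mpr (mem_ball'.mp hz)⟩

section Multifunction

variable {X P Y : Type*} [NormedAddCommGroup X] [NormedAddCommGroup P] [NormedAddCommGroup Y]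
  {H : X × P → Set Y} {xb : X} {pb : P}

theorem OpenWrtXUnifP.exists_forall_lt {c : ℝ} (hc : 0 < c) (hopen : OpenWrtXUnifP H xb pb 0 c) :
    ∃ m > 0, ∀ᶠ z in 𝓝 (xb, pb), ∀ ρ ∈ Ioo 0 m, ∀ y ∈ H z, ‖y‖ < ρ * c →
      ∃ x' ∈ {x | (0 : Y) ∈ H (x, z.2)}, dist z.1 x' < ρ := by
  obtain ⟨ε, hε, U, hU, V, hV, W, hW, hop⟩ := hopen
  obtain ⟨w, hw, hwW⟩ := Metric.mem_nhds_iff.mp hW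
  refine ⟨min ε (w / c), lt_min hε (div_pos hw hc), ?_⟩
  filter_upwards [prod_mem_nhds hU hV] with z hz ρ ⟨hρ, hρm⟩ y hyH hy
  have hρw : ρ * c < w := (lt_div_iff₀ hc).mp (hρm.trans_le (min_le_right _ _))
  have hyW : y ∈ W := hwW (mem_ball_zero_iff.mpr (hy.trans hρw))
  have h0 : (0 : Y) ∈ ball y (ρ * c) := mem_ball.mpr (by rwa [dist_zero_left])
  obtain ⟨x', hx', h0x'⟩ := mem_iUnion₂.mp
    (hop ρ ⟨hρ, hρm.trans_le (min_le_left _ _)⟩ z.2 hz.2 z.1 hz.1 y ⟨hyH, hyW⟩ h0)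
  exact ⟨x', h0x', mem_ball'.mp hx'⟩

theorem OpenWrtXUnifP.eventually_infEDist_le {c : ℝ} (hisc : InnerSemicontinuousAt H (xb, pb) 0)
    (hc : 0 < c) (hopen : OpenWrtXUnifP H xb pb 0 c) :
    ∀ᶠ z in 𝓝 (xb, pb),
      infEDist z.1 {x | (0 : Y) ∈ H (x, z.2)} ≤ ENNReal.ofReal c⁻¹ * infEDist 0 (H z) := by
  obtain ⟨m, hm, hrate⟩ := hopen.exists_forall_lt hc
  filter_upwards [hrate, hisc.eventually_infEDist_lt (mul_pos hm hc)] with z hz hB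
  exact infEDist_le_inv_mul_infEDist_of_forall_lt hc hz hB

theorem LipschitzLikeWrtPUnifX.exists_infEDist_zero_le {l : ℝ} (hl : 0 ≤ l)
    (hL : LipschitzLikeWrtPUnifX H xb pb 0 l) :
    ∃ U ∈ 𝓝 xb, ∃ V ∈ 𝓝 pb, ∀ x ∈ U, ∀ p ∈ V, ∀ q ∈ V, (0 : Y) ∈ H (x, p) →
      infEDist 0 (H (x, q)) ≤ ENNReal.ofReal (l * ‖p - q‖) := by
  obtain ⟨U, hU, V, hV, W, hW, hLip⟩ := hL
  refine ⟨U, hU, V, hV, fun x hx p hp q hq h0 => ?_⟩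
  exact infEDist_le_of_mem_add_closedBall (by positivity)
    (hLip x hx p hp q hq ⟨h0, mem_of_mem_nhds hW⟩)

end Multifunction

theorem lipschitzLikeAround_of_infEDist_le {P X : Type*} [NormedAddCommGroup P]
    [NormedAddCommGroup X] {S : P → Set X} {pb : P} {xb : X} {V : Set P} {U : Set X}
    (hV : V ∈ 𝓝 pb) (hU : U ∈ 𝓝 xb) {κ lam : ℝ} (hκ : 0 ≤ κ) (hlam : κ < lam)
    (h : ∀ p ∈ V, ∀ q ∈ V, ∀ x ∈ S p ∩ U, infEDist x (S q) ≤ ENNReal.ofReal (κ * ‖p - q‖)) :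
    LipschitzLikeAround S pb xb lam := by
  refine ⟨V, hV, U, hU, fun p hp q hq x hx => ?_⟩
  rcases eq_or_ne p q with rfl | hpq
  · exact ⟨x, hx.1, 0, by simp, add_zero x⟩
  have hpq : 0 < ‖p - q‖ := norm_pos_iff.mpr (sub_ne_zero.mpr hpq)
  refine add_subset_add_left ball_subset_closedBall ?_
  rw [add_ball_zero, mem_thickening_iff_infEDist_lt]
  refine (h p hp q hq x hx).trans_lt ?_
  rw [ENNReal.ofReal_lt_ofReal_iff (by nlinarith)]
  exact mul_lt_mul_of_pos_right hlam hpq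

theorem stmt6_general {X Y P : Type*}
    [NormedAddCommGroup X]
    [NormedAddCommGroup Y]
    [NormedAddCommGroup P]
    (H : X × P → Set Y) (xb : X) (pb : P)
    (S : P → Set X) (hS : ∀ p, S p = {x : X | (0 : Y) ∈ H (x, p)})
    (hisc : InnerSemicontinuousAt H (xb, pb) 0)
    (c : ℝ) (hc : 0 < c) (hopen : OpenWrtXUnifP H xb pb 0 c) :
    (∃ rb > (0 : ℝ), ∃ tb > (0 : ℝ), ∀ x ∈ ball xb rb, ∀ p ∈ ball pb tb,
      EMetric.infEdist x (S p) ≤ ENNReal.ofReal c⁻¹ * EMetric.infEdist 0 (H (x, p))) ∧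
    (∀ l : ℝ, 0 < l → LipschitzLikeWrtPUnifX H xb pb 0 l →
      (∃ V ∈ 𝓝 pb, ∃ U ∈ 𝓝 xb, ∀ p₁ ∈ V, ∀ p₂ ∈ V, ∀ x ∈ S p₁ ∩ U,
        EMetric.infEdist x (S p₂) ≤ ENNReal.ofReal (c⁻¹ * l * ‖p₁ - p₂‖)) ∧
      (∀ lam : ℝ, c⁻¹ * l < lam → LipschitzLikeAround S pb xb lam)) := by
  obtain ⟨r, hr, hbound⟩ := eventually_nhds_iff_ball.mp (hopen.eventually_infEDist_le hisc hc)
  have hbound' : ∀ x ∈ ball xb r, ∀ p ∈ ball pb r,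
      infEDist x (S p) ≤ ENNReal.ofReal c⁻¹ * infEDist 0 (H (x, p)) := fun x hx p hp => by
    rw [hS]
    exact hbound (x, p) (ball_prod_same xb pb r ▸ mk_mem_prod hx hp)
  refine ⟨⟨r, hr, r, hr, hbound'⟩, fun l hl hLip => ?_⟩
  obtain ⟨U, hU, V, hV, hH⟩ := hLip.exists_infEDist_zero_le hl.le
  have hVr : V ∩ ball pb r ∈ 𝓝 pb := inter_mem hV (ball_mem_nhds pb hr)
  have hUr : U ∩ ball xb r ∈ 𝓝 xb := inter_mem hU (ball_mem_nhds xb hr)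
  have hlip : ∀ p₁ ∈ V ∩ ball pb r, ∀ p₂ ∈ V ∩ ball pb r, ∀ x ∈ S p₁ ∩ (U ∩ ball xb r),
      infEDist x (S p₂) ≤ ENNReal.ofReal (c⁻¹ * l * ‖p₁ - p₂‖) := by
    rintro p₁ ⟨hp₁, -⟩ p₂ ⟨hp₂, hp₂r⟩ x ⟨hxS, hxU, hxr⟩
    calc infEDist x (S p₂) ≤ ENNReal.ofReal c⁻¹ * infEDist 0 (H (x, p₂)) := hbound' x hxr p₂ hp₂r
      _ ≤ ENNReal.ofReal c⁻¹ * ENNReal.ofReal (l * ‖p₁ - p₂‖) := by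
        gcongr
        rw [hS] at hxS
        exact hH x hxU p₁ hp₁ p₂ hp₂ hxS
      _ = ENNReal.ofReal (c⁻¹ * l * ‖p₁ - p₂‖) := by
        rw [← ENNReal.ofReal_mul (by positivity), mul_assoc]
  exact ⟨⟨_, hVr, _, hUr, hlip⟩,
    fun lam hlam => lipschitzLikeAround_of_infEDist_le hVr hUr (by positivity) hlam hlip⟩

/-- implicit multifunction theorem, item (i). -/
theorem stmt6 {X Y P : Type*}
    [NormedAddCommGroup X] [NormedSpace ℝ X] [CompleteSpace X]
    [NormedAddCommGroup Y] [NormedSpace ℝ Y] [CompleteSpace Y]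
    [NormedAddCommGroup P] [NormedSpace ℝ P] [CompleteSpace P]
    (H : X × P → Set Y) (xb : X) (pb : P) (h0 : (0 : Y) ∈ H (xb, pb))
    (S : P → Set X) (hS : ∀ p, S p = {x : X | (0 : Y) ∈ H (x, p)})
    (hisc : InnerSemicontinuousAt H (xb, pb) 0)
    (c : ℝ) (hc : 0 < c) (hopen : OpenWrtXUnifP H xb pb 0 c) :
    (∃ rb > (0 : ℝ), ∃ tb > (0 : ℝ), ∀ x ∈ ball xb rb, ∀ p ∈ ball pb tb,
      EMetric.infEdist x (S p) ≤ ENNReal.ofReal c⁻¹ * EMetric.infEdist 0 (H (x, p))) ∧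
    (∀ l : ℝ, 0 < l → LipschitzLikeWrtPUnifX H xb pb 0 l →
      (∃ V ∈ 𝓝 pb, ∃ U ∈ 𝓝 xb, ∀ p₁ ∈ V, ∀ p₂ ∈ V, ∀ x ∈ S p₁ ∩ U,
        EMetric.infEdist x (S p₂) ≤ ENNReal.ofReal (c⁻¹ * l * ‖p₁ - p₂‖)) ∧
      (∀ lam : ℝ, c⁻¹ * l < lam → LipschitzLikeAround S pb xb lam)) :=
  stmt6_general H xb pb S hS hisc c hc hopen
end

section
/- Let X, Y, P be real Banach spaces, H : X × P ⇒ Y a multifunction with 0 ∈ H(x̄,p̄), and S : P ⇒ X its implicit multifunction S(p) = {x ∈ X : 0 ∈ H(x,p)}. Suppose H is inner semicontinuous at ((x̄,p̄),0) and H is open with linear rate c > 0 with respect to p uniformly in x around ((x̄,p̄),0). Then there exist r̄, t̄ > 0 such that d(p, S⁻¹(x)) ≤ c⁻¹ d(0, H(x,p)) for every (x,p) ∈ B(x̄,r̄) × B(p̄,t̄). If, moreover, H is Lipschitz-like with respect to x uniformly in p around ((x̄,p̄),0) with constant l > 0, then there exist neighborhoods U of x̄ and V of p̄ such that d(p, S⁻¹(x₂))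 ≤ c⁻¹ l ‖x₁ − x₂‖ for every x₁,x₂ ∈ U and every p ∈ S⁻¹(x₁) ∩ V; in particular S is metrically regular around (p̄,x̄) with any constant λ > c⁻¹ l. -/
open Metric Set Filter Topology Pointwise

/-- `H : X × P ⇒ Y` is `c`-open with respect to `p` uniformly in `x`
around `((xb, pb), yb)`. -/
def OpenWrtPUnifX {X P Y : Type*} [NormedAddCommGroup X] [NormedAddCommGroup P]
    [NormedAddCommGroup Y] (H : X × P → Set Y) (xb : X) (pb : P) (yb : Y)
    (c : ℝ) : Prop :=
  ∃ ε > (0 : ℝ), ∃ U ∈ 𝓝 xb, ∃ V ∈ 𝓝 pb, ∃ W ∈ 𝓝 yb,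
    ∀ ρ ∈ Set.Ioo (0 : ℝ) ε, ∀ x ∈ U, ∀ p ∈ V, ∀ y ∈ H (x, p) ∩ W,
      ball y (ρ * c) ⊆ ⋃ q ∈ ball p ρ, H (x, q)

/-- `H : X × P ⇒ Y` is Lipschitz-like with respect to `x` uniformly in `p`
around `((xb, pb), yb)` with constant `l`. -/
def LipschitzLikeWrtXUnifP {X P Y : Type*} [NormedAddCommGroup X]
    [NormedAddCommGroup P] [NormedAddCommGroup Y] (H : X × P → Set Y)
    (xb : X) (pb : P) (yb : Y) (l : ℝ) : Prop :=
  ∃ U ∈ 𝓝 xb, ∃ V ∈ 𝓝 pb, ∃ W ∈ 𝓝 yb, ∀ x ∈ U, ∀ u ∈ U, ∀ p ∈ V,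
    H (x, p) ∩ W ⊆ H (u, p) + closedBall (0 : Y) (l * ‖x - u‖)

/-- `S : P ⇒ X` is metrically regular around `(pb, xb)` with constant `lam`. -/
def MetricallyRegularAround {P X : Type*} [NormedAddCommGroup P]
    [NormedAddCommGroup X] (S : P → Set X) (pb : P) (xb : X) (lam : ℝ) : Prop :=
  ∃ V ∈ 𝓝 pb, ∃ U ∈ 𝓝 xb, ∀ p ∈ V, ∀ x ∈ U,
    EMetric.infEdist p {q | x ∈ S q} ≤ ENNReal.ofReal lam * EMetric.infEdist x (S p)

/-!
Openness of `H` in `p` at rate `c` says that if `y ∈ H (x, p)` is small, then moving `p` by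
slightly more than `‖y‖ / c` reaches some `q` with `0 ∈ H (x, q)`. Inner semicontinuity provides
such small `y` near `(x̄, p̄)`, which gives `d(p, S⁻¹ x) ≤ c⁻¹ d(0, H (x, p))`. Under the
Lipschitz-like property, `p ∈ S⁻¹ x₁` forces `d(0, H (x₂, p)) ≤ l ‖x₁ - x₂‖`, so `S⁻¹` has the
Aubin property with constant `c⁻¹ l`. Metric regularity then follows by testing
`d(p, S⁻¹ x)` against each `x₁ ∈ S p`: points `x₁` near `x` are handled by the Aubin property,
far ones by `d(p, S⁻¹ x) → 0` at `(p̄, x̄)`.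
-/

open ENNReal

theorem le_mul_infEDist_of_forall_le_mul_edist {α : Type*} [PseudoEMetricSpace α]
    {s : Set α} {x : α} {a K : ℝ≥0∞} (hK₀ : K ≠ 0) (hK : K ≠ ∞)
    (h : ∀ y ∈ s, a ≤ K * edist x y) : a ≤ K * infEDist x s := by
  rw [infEDist, ENNReal.mul_iInf_of_ne hK₀ hK]
  refine le_iInf fun y => ?_
  rw [ENNReal.mul_iInf_of_ne hK₀ hK]
  exact le_iInf (h y)

theorem infEDist_le_of_mem_add_closedBall_zero {Y : Type*} [SeminormedAddCommGroup Y]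
    {B : Set Y} {y : Y} {r : ℝ} (hy : y ∈ B + closedBall 0 r) :
    infEDist y B ≤ ENNReal.ofReal r := by
  obtain ⟨b, hb, z, hz, rfl⟩ := hy
  calc infEDist (b + z) B ≤ edist (b + z) b := infEDist_le_edist_of_mem hb
    _ = ENNReal.ofReal ‖z‖ := by rw [edist_dist, dist_self_add_left]
    _ ≤ ENNReal.ofReal r := ENNReal.ofReal_le_ofReal (mem_closedBall_zero_iff.1 hz)

theorem InnerSemicontinuousAt.tendsto_infEDist {α Y : Type*} [TopologicalSpace α]
    [PseudoEMetricSpace Y] {H : α → Set Y} {a : α} {y : Y}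
    (hisc : InnerSemicontinuousAt H a y) :
    Tendsto (fun b => infEDist y (H b)) (𝓝 a) (𝓝 0) := by
  refine ENNReal.tendsto_nhds_zero.2 fun ε hε => ?_
  obtain ⟨U, hU, hUH⟩ := hisc (eball y ε) isOpen_eball (mem_eball_self hε)
  filter_upwards [hU] with b hb
  obtain ⟨z, hzH, hzy⟩ := hUH b hb
  calc infEDist y (H b) ≤ edist y z := infEDist_le_edist_of_mem hzH
    _ ≤ ε := by rw [edist_comm]; exact (mem_eball.1 hzy).le

def implicitMap {X P Y : Type*} [Zero Y] (H : X × P → Set Y) (p : P) : Set X :=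
  {x | (0 : Y) ∈ H (x, p)}

theorem infEDist_implicitMap_le_of_forall_ball_subset {X P Y : Type*} [NormedAddCommGroup P]
    [NormedAddCommGroup Y] {H : X × P → Set Y} {x : X} {p : P}
    {y : Y} {c ε : ℝ} (hc : 0 < c) (hyε : c⁻¹ * ‖y‖ < ε)
    (hcover : ∀ ρ ∈ Ioo 0 ε, ball y (ρ * c) ⊆ ⋃ q ∈ ball p ρ, H (x, q)) :
    infEDist p {q | x ∈ implicitMap H q} ≤ ENNReal.ofReal (c⁻¹ * ‖y‖) := by
  have hρ : ∀ ρ ∈ Ioo (c⁻¹ * ‖y‖) ε,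
      infEDist p {q | x ∈ implicitMap H q} ≤ ENNReal.ofReal ρ := by
    rintro ρ ⟨hyρ, hρε⟩
    have h0 : (0 : Y) ∈ ball y (ρ * c) := by
      rw [mem_ball, dist_zero_left]
      rwa [inv_mul_lt_iff₀ hc, mul_comm] at hyρ
    obtain ⟨q, hq, hq0⟩ := mem_iUnion₂.1 <|
      hcover ρ ⟨(by positivity : 0 ≤ c⁻¹ * ‖y‖).trans_lt hyρ, hρε⟩ h0
    calc infEDist p {q | x ∈ implicitMap H q} ≤ edist p q := infEDist_le_edist_of_mem hq0
      _ ≤ ENNReal.ofReal ρ := by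
        rw [edist_dist, dist_comm]
        exact ofReal_le_ofReal (mem_ball.1 hq).le
  exact ge_of_tendsto (ENNReal.continuous_ofReal.tendsto _ |>.mono_left nhdsWithin_le_nhds)
    (eventually_of_mem (Ioo_mem_nhdsGT hyε) hρ)

section Implicit

variable {X P Y : Type*} [NormedAddCommGroup X] [NormedAddCommGroup P] [NormedAddCommGroup Y]

theorem OpenWrtPUnifX.eventually_infEDist_implicitMap_le {H : X × P → Set Y} {xb : X} {pb : P}
    {c : ℝ} (hopen : OpenWrtPUnifX H xb pb 0 c) (hc : 0 < c)
    (hisc : InnerSemicontinuousAt H (xb, pb) 0) :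
    ∀ᶠ z : X × P in 𝓝 (xb, pb),
      infEDist z.2 {q | z.1 ∈ implicitMap H q} ≤ ENNReal.ofReal c⁻¹ * infEDist 0 (H z) := by
  obtain ⟨ε, hε, U, hU, V, hV, W, hW, hcover⟩ := hopen
  obtain ⟨w, hw, hwW⟩ := Metric.mem_nhds_iff.1 hW
  set δ := min w (ε * c)
  have hδ : 0 < δ := lt_min hw (by positivity)
  have hedist : ∀ y : Y, edist 0 y = ENNReal.ofReal ‖y‖ := fun y => by
    rw [edist_dist, dist_zero_left]
  filter_upwards [prod_mem_nhds hU hV,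
    hisc.tendsto_infEDist.eventually (eventually_lt_nhds (ofReal_pos.2 hδ))]
    with ⟨x, p⟩ ⟨hx, hp⟩ hnear
  have hsmall : ∀ y ∈ H (x, p), ‖y‖ < δ →
      infEDist p {q | x ∈ implicitMap H q} ≤ ENNReal.ofReal c⁻¹ * edist 0 y := by
    intro y hy hyδ
    rw [hedist, ← ofReal_mul (inv_nonneg.2 hc.le)]
    refine infEDist_implicitMap_le_of_forall_ball_subset hc ?_
      fun ρ hρ => hcover ρ hρ x hx p hp y ⟨hy, hwW ?_⟩
    · rw [inv_mul_lt_iff₀ hc, mul_comm]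
      exact hyδ.trans_le (min_le_right _ _)
    · exact mem_ball_zero_iff.2 (hyδ.trans_le (min_le_left _ _))
  obtain ⟨y₀, hy₀, hy₀δ⟩ := infEDist_lt_iff.1 hnear
  rw [hedist, ofReal_lt_ofReal_iff hδ] at hy₀δ
  refine le_mul_infEDist_of_forall_le_mul_edist (ofReal_pos.2 (inv_pos.2 hc)).ne' ofReal_ne_top
    fun y hy => ?_
  -- points of `H (x, p)` outside `ball 0 δ` are dominated by the small point `y₀`
  rcases lt_or_ge ‖y‖ δ with hyδ | hyδ
  · exact hsmall y hy hyδ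
  · calc _ ≤ ENNReal.ofReal c⁻¹ * edist 0 y₀ := hsmall y₀ hy₀ hy₀δ
      _ ≤ ENNReal.ofReal c⁻¹ * edist 0 y := by
        rw [hedist, hedist]
        gcongr
        exact hy₀δ.le.trans hyδ

theorem exists_nhds_infEDist_implicitMap_le_mul_norm {H : X × P → Set Y} {xb : X} {pb : P}
    {c l : ℝ} (hc : 0 ≤ c)
    (hest : ∀ᶠ z : X × P in 𝓝 (xb, pb),
      infEDist z.2 {q | z.1 ∈ implicitMap H q} ≤ ENNReal.ofReal c⁻¹ * infEDist 0 (H z))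
    (hlip : LipschitzLikeWrtXUnifP H xb pb 0 l) :
    ∃ U ∈ 𝓝 xb, ∃ V ∈ 𝓝 pb, ∀ x₁ ∈ U, ∀ x₂ ∈ U, ∀ p ∈ {q | x₁ ∈ implicitMap H q} ∩ V,
      infEDist p {q | x₂ ∈ implicitMap H q} ≤ ENNReal.ofReal (c⁻¹ * l * ‖x₁ - x₂‖) := by
  obtain ⟨U₁, hU₁, V₁, hV₁, hUV₁⟩ := mem_nhds_prod_iff.1 hest
  obtain ⟨U₂, hU₂, V₂, hV₂, W, hW, hUVW⟩ := hlip
  refine ⟨U₁ ∩ U₂, inter_mem hU₁ hU₂, V₁ ∩ V₂, inter_mem hV₁ hV₂, ?_⟩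
  rintro x₁ ⟨-, hx₁⟩ x₂ ⟨hx₂, hx₂'⟩ p ⟨hp0, hpV₁, hpV₂⟩
  calc infEDist p {q | x₂ ∈ implicitMap H q}
      ≤ ENNReal.ofReal c⁻¹ * infEDist 0 (H (x₂, p)) := hUV₁ ⟨hx₂, hpV₁⟩
    _ ≤ ENNReal.ofReal c⁻¹ * ENNReal.ofReal (l * ‖x₁ - x₂‖) := by
      gcongr
      exact infEDist_le_of_mem_add_closedBall_zero
        (hUVW x₁ hx₁ x₂ hx₂' p hpV₂ ⟨hp0, mem_of_mem_nhds hW⟩)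
    _ = ENNReal.ofReal (c⁻¹ * l * ‖x₁ - x₂‖) := by
      rw [← ofReal_mul (inv_nonneg.2 hc), mul_assoc]

end Implicit

theorem metricallyRegularAround_of_forall_infEDist_le_mul_norm {X P : Type*}
    [NormedAddCommGroup X] [NormedAddCommGroup P] {S : P → Set X} {xb : X} {pb : P}
    {κ lam : ℝ}
    (hlip : ∃ U ∈ 𝓝 xb, ∃ V ∈ 𝓝 pb, ∀ x₁ ∈ U, ∀ x₂ ∈ U, ∀ p ∈ {q | x₁ ∈ S q} ∩ V,
      infEDist p {q | x₂ ∈ S q} ≤ ENNReal.ofReal (κ * ‖x₁ - x₂‖))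
    (hlim : Tendsto (fun z : X × P => infEDist z.2 {q | z.1 ∈ S q}) (𝓝 (xb, pb)) (𝓝 0))
    (hκ : κ ≤ lam) (hlam : 0 < lam) :
    MetricallyRegularAround S pb xb lam := by
  obtain ⟨U, hU, V, hV, hUV⟩ := hlip
  obtain ⟨r, hr, hrU⟩ := Metric.mem_nhds_iff.1 hU
  have hr2 : 0 < r / 2 := half_pos hr
  obtain ⟨U₁, hU₁, V₁, hV₁, hUV₁⟩ := mem_nhds_prod_iff.1 <|
    ENNReal.tendsto_nhds_zero.1 hlim _ (ofReal_pos.2 (mul_pos hlam hr2))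
  refine ⟨V ∩ V₁, inter_mem hV hV₁, ball xb (r / 2) ∩ U₁, inter_mem (ball_mem_nhds _ hr2) hU₁,
    ?_⟩
  rintro p ⟨hpV, hpV₁⟩ x ⟨hxb, hxU₁⟩
  refine le_mul_infEDist_of_forall_le_mul_edist (ofReal_pos.2 hlam).ne' ofReal_ne_top
    fun x₁ hx₁ => ?_
  rw [edist_dist, ← ofReal_mul hlam.le]
  rcases lt_or_ge (dist x x₁) (r / 2) with hnear | hfar
  · have hxU : x ∈ U := hrU (ball_subset_ball (half_le_self hr.le) hxb)
    have hx₁U : x₁ ∈ U := hrU <| mem_ball.2 <|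
      calc dist x₁ xb ≤ dist x₁ x + dist x xb := dist_triangle _ _ _
        _ < r / 2 + r / 2 := add_lt_add (dist_comm x x₁ ▸ hnear) (mem_ball.1 hxb)
        _ = r := add_halves r
    calc _ ≤ ENNReal.ofReal (κ * ‖x₁ - x‖) := hUV x₁ hx₁U x hxU p ⟨hx₁, hpV⟩
      _ ≤ _ := by
        rw [← dist_eq_norm, dist_comm]
        exact ofReal_le_ofReal (mul_le_mul_of_nonneg_right hκ dist_nonneg)
  · calc _ ≤ ENNReal.ofReal (lam * (r / 2)) := hUV₁ (mk_mem_prod hxU₁ hpV₁)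
      _ ≤ _ := ofReal_le_ofReal (mul_le_mul_of_nonneg_left hfar hlam.le)

theorem stmt7_general {X Y P : Type*}
    [NormedAddCommGroup X]
    [NormedAddCommGroup Y]
    [NormedAddCommGroup P]
    (H : X × P → Set Y) (xb : X) (pb : P)
    (S : P → Set X) (hS : ∀ p, S p = {x : X | (0 : Y) ∈ H (x, p)})
    (hisc : InnerSemicontinuousAt H (xb, pb) 0)
    (c : ℝ) (hc : 0 < c) (hopen : OpenWrtPUnifX H xb pb 0 c) :
    (∃ rb > (0 : ℝ), ∃ tb > (0 : ℝ), ∀ x ∈ ball xb rb, ∀ p ∈ ball pb tb,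
      EMetric.infEdist p {q | x ∈ S q} ≤
        ENNReal.ofReal c⁻¹ * EMetric.infEdist 0 (H (x, p))) ∧
    (∀ l : ℝ, 0 < l → LipschitzLikeWrtXUnifP H xb pb 0 l →
      (∃ U ∈ 𝓝 xb, ∃ V ∈ 𝓝 pb, ∀ x₁ ∈ U, ∀ x₂ ∈ U, ∀ p ∈ {q | x₁ ∈ S q} ∩ V,
        EMetric.infEdist p {q | x₂ ∈ S q} ≤ ENNReal.ofReal (c⁻¹ * l * ‖x₁ - x₂‖)) ∧
      (∀ lam : ℝ, c⁻¹ * l < lam → MetricallyRegularAround S pb xb lam)) := by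
  obtain rfl : S = implicitMap H := funext hS
  have hest := hopen.eventually_infEDist_implicitMap_le hc hisc
  have hlim : Tendsto (fun z : X × P => infEDist z.2 {q | z.1 ∈ implicitMap H q})
      (𝓝 (xb, pb)) (𝓝 0) :=
    tendsto_of_tendsto_of_tendsto_of_le_of_le' tendsto_const_nhds
      (by simpa using ENNReal.Tendsto.const_mul hisc.tendsto_infEDist (.inr ofReal_ne_top))
      (.of_forall fun _ => zero_le) hest
  refine ⟨?_, fun l hl hlip => ?_⟩
  · obtain ⟨r, hr, hball⟩ := Metric.eventually_nhds_iff_ball.1 hest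
    exact ⟨r, hr, r, hr, fun x hx p hp => hball (x, p) (ball_prod_same xb pb r ▸ ⟨hx, hp⟩)⟩
  · have hlipS := exists_nhds_infEDist_implicitMap_le_mul_norm hc.le hest hlip
    exact ⟨hlipS, fun lam hlam => metricallyRegularAround_of_forall_infEDist_le_mul_norm
      hlipS hlim hlam.le ((by positivity : 0 < c⁻¹ * l).trans hlam)⟩

/-- implicit multifunction theorem, item (ii). -/
theorem stmt7 {X Y P : Type*}
    [NormedAddCommGroup X] [NormedSpace ℝ X] [CompleteSpace X]
    [NormedAddCommGroup Y] [NormedSpace ℝ Y] [CompleteSpace Y]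
    [NormedAddCommGroup P] [NormedSpace ℝ P] [CompleteSpace P]
    (H : X × P → Set Y) (xb : X) (pb : P) (h0 : (0 : Y) ∈ H (xb, pb))
    (S : P → Set X) (hS : ∀ p, S p = {x : X | (0 : Y) ∈ H (x, p)})
    (hisc : InnerSemicontinuousAt H (xb, pb) 0)
    (c : ℝ) (hc : 0 < c) (hopen : OpenWrtPUnifX H xb pb 0 c) :
    (∃ rb > (0 : ℝ), ∃ tb > (0 : ℝ), ∀ x ∈ ball xb rb, ∀ p ∈ ball pb tb,
      EMetric.infEdist p {q | x ∈ S q} ≤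
        ENNReal.ofReal c⁻¹ * EMetric.infEdist 0 (H (x, p))) ∧
    (∀ l : ℝ, 0 < l → LipschitzLikeWrtXUnifP H xb pb 0 l →
      (∃ U ∈ 𝓝 xb, ∃ V ∈ 𝓝 pb, ∀ x₁ ∈ U, ∀ x₂ ∈ U, ∀ p ∈ {q | x₁ ∈ S q} ∩ V,
        EMetric.infEdist p {q | x₂ ∈ S q} ≤ ENNReal.ofReal (c⁻¹ * l * ‖x₁ - x₂‖)) ∧
      (∀ lam : ℝ, c⁻¹ * l < lam → MetricallyRegularAround S pb xb lam)) :=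
  stmt7_general H xb pb S hS hisc c hc hopen
end

section
/- Let X, Y, Z, W be real Banach spaces, F : X × Y ⇒ Z a multifunction, g : W → Z a function and (x̄,ȳ,z̄,w̄) ∈ X × Y × Z × W with z̄ := −g(w̄) ∈ F(x̄,ȳ). Define Γ : Y × W ⇒ X by Γ(y,w) = {x ∈ X : 0 ∈ F(x,y) + g(w)}. Assume: (i) F is Lipschitz-like with respect to y uniformly in x around ((x̄,ȳ),z̄) with constant η ≥ 0; (ii) F is metrically regular with respect to x uniformly in y around ((x̄,ȳ),z̄) with constant k > 0; (iii) for every y in a neighborhood of ȳ, the multifunction x ⇒ F(x,y) is inner semicontinuous at (x̄,z̄); (iv) g is Lipschitz continuous on a neighborhood of w̄ with constant λ. Then there exists α > 0 such that for every (y,w),(y′,w′) ∈ D(ȳ,α) × D(w̄,α) and every ε > 0, Γ(y′,w′) ∩ D(x̄,α) ⊆ Γ(y,w) + (k+ε)(η‖y−y′‖ + λ‖w−w′‖)·D_X. In particular, Γ is Lipschitz-like around ((ȳ,w̄),x̄). -/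
open Metric Set Filter Topology Pointwise

/-!
Take `x ∈ Γ (y', w')` near `x̄`, so that `-g w' ∈ F (x, y')`. Lipschitz-likeness in `y` gives
`u ∈ F (x, y)` with `‖u + g w'‖ ≤ η ‖y - y'‖`, hence
`d (-g w, F (x, y)) ≤ η ‖y - y'‖ + λ ‖w - w'‖`. Metric regularity in `x` then produces `x'` with
`-g w ∈ F (x', y)`, i.e. `x' ∈ Γ (y, w)`, within `(k + ε)` times that bound of `x`. All
neighbourhoods are shrunk to balls of a common radius, using the continuity of `g` at `w̄` to
keep `-g w` near `z̄`.
-/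

theorem mem_add_closedBall_zero_iff {E : Type*} [SeminormedAddCommGroup E] {s : Set E} {x : E}
    {r : ℝ} : x ∈ s + closedBall 0 r ↔ ∃ y ∈ s, dist x y ≤ r := by
  constructor
  · rintro ⟨y, hy, c, hc, rfl⟩
    exact ⟨y, hy, by rwa [dist_eq_norm, add_sub_cancel_left, ← mem_closedBall_zero_iff]⟩
  · rintro ⟨y, hy, hxy⟩
    exact ⟨y, hy, x - y, by rwa [mem_closedBall_zero_iff, ← dist_eq_norm], add_sub_cancel y x⟩

theorem exists_closedBall_subset_of_mem_nhds₃ {A B C : Type*} [PseudoMetricSpace A]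
    [PseudoMetricSpace B] [PseudoMetricSpace C] {a : A} {b : B} {c : C} {s : Set A} {t : Set B}
    {u : Set C} (hs : s ∈ 𝓝 a) (ht : t ∈ 𝓝 b) (hu : u ∈ 𝓝 c) :
    ∃ α > 0, closedBall a α ⊆ s ∧ closedBall b α ⊆ t ∧ closedBall c α ⊆ u := by
  have h := (eventually_closedBall_subset hs).and
    ((eventually_closedBall_subset ht).and (eventually_closedBall_subset hu))
  obtain ⟨α, hsub, hα⟩ := ((h.filter_mono nhdsWithin_le_nhds).and
    (self_mem_nhdsWithin : ∀ᶠ α in 𝓝[>] (0 : ℝ), 0 < α)).exists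
  exact ⟨α, hα, hsub⟩

section MetricRegularity

variable {X Y Z : Type*}

/-- The slack `ε` is needed because the distance from `x` to `G⁻¹ z` need not be attained. -/
theorem exists_dist_le_of_infEDist_le_mul [PseudoMetricSpace X] [MetricSpace Z] {G : X → Set Z}
    {x : X} {z u : Z} {k r ε : ℝ} (hk : 0 ≤ k) (hε : 0 < ε)
    (hreg : infEDist x {x' | z ∈ G x'} ≤ ENNReal.ofReal k * infEDist z (G x))
    (hu : u ∈ G x) (hzu : dist z u ≤ r) : ∃ x', z ∈ G x' ∧ dist x x' ≤ (k + ε) * r := by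
  rcases (dist_nonneg.trans hzu).eq_or_lt with rfl | hr
  · rw [dist_le_zero.1 hzu]
    exact ⟨x, hu, by simp⟩
  have hlt : infEDist x {x' | z ∈ G x'} < ENNReal.ofReal ((k + ε) * r) := calc
    _ ≤ ENNReal.ofReal k * ENNReal.ofReal r := by
      grw [hreg, infEDist_le_edist_of_mem hu, edist_dist, hzu]
    _ = ENNReal.ofReal (k * r) := (ENNReal.ofReal_mul hk).symm
    _ < ENNReal.ofReal ((k + ε) * r) := by
      rw [ENNReal.ofReal_lt_ofReal_iff (by positivity)]
      nlinarith
  obtain ⟨x', hx', hxx'⟩ := infEDist_lt_iff.1 hlt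
  exact ⟨x', hx', (edist_lt_ofReal.1 hxx').le⟩

def MetricallyRegularInFst [PseudoEMetricSpace X] [PseudoEMetricSpace Z] (F : X × Y → Set Z)
    (U : Set X) (V : Set Y) (W₀ : Set Z) (k : ℝ) : Prop :=
  ∀ x ∈ U, ∀ y ∈ V, ∀ z ∈ W₀,
    infEDist x {x' | z ∈ F (x', y)} ≤ ENNReal.ofReal k * infEDist z (F (x, y))

def LipschitzLikeInSnd [SeminormedAddCommGroup Y] [SeminormedAddCommGroup Z] (F : X × Y → Set Z)
    (U : Set X) (V : Set Y) (W₀ : Set Z) (η : ℝ) : Prop :=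
  ∀ x ∈ U, ∀ y ∈ V, ∀ y' ∈ V, F (x, y) ∩ W₀ ⊆ F (x, y') + closedBall 0 (η * ‖y - y'‖)

variable {F : X × Y → Set Z} {U U' : Set X} {V V' : Set Y} {W₀ W₀' : Set Z}

theorem MetricallyRegularInFst.mono [PseudoEMetricSpace X] [PseudoEMetricSpace Z] {k : ℝ}
    (h : MetricallyRegularInFst F U V W₀ k) (hU : U' ⊆ U) (hV : V' ⊆ V) (hW : W₀' ⊆ W₀) :
    MetricallyRegularInFst F U' V' W₀' k :=
  fun x hx y hy z hz ↦ h x (hU hx) y (hV hy) z (hW hz)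

theorem LipschitzLikeInSnd.mono [SeminormedAddCommGroup Y] [SeminormedAddCommGroup Z] {η : ℝ}
    (h : LipschitzLikeInSnd F U V W₀ η) (hU : U' ⊆ U) (hV : V' ⊆ V) (hW : W₀' ⊆ W₀) :
    LipschitzLikeInSnd F U' V' W₀' η :=
  fun x hx y hy y' hy' ↦ (inter_subset_inter_right _ hW).trans (h x (hU hx) y (hV hy) y' (hV hy'))

end MetricRegularity

section ImplicitMultifunction

variable {X Y Z W : Type*} [SeminormedAddCommGroup X] [SeminormedAddCommGroup Y]
  [NormedAddCommGroup Z] [SeminormedAddCommGroup W]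

theorem implicit_inter_subset_add_closedBall {F : X × Y → Set Z} {g : W → Z}
    {Γ : Y × W → Set X} (hΓ : ∀ y w, Γ (y, w) = {x | ∃ v ∈ F (x, y), v + g w = 0})
    {U : Set X} {V : Set Y} {W₀ : Set Z} {Ω : Set W} {η k lam ε : ℝ}
    (hlip : LipschitzLikeInSnd F U V W₀ η) (hreg : MetricallyRegularInFst F U V W₀ k)
    (hg : ∀ w ∈ Ω, ∀ w' ∈ Ω, ‖g w - g w'‖ ≤ lam * ‖w - w'‖) (hgW : ∀ w ∈ Ω, -g w ∈ W₀)
    (hk : 0 ≤ k) (hε : 0 < ε) {y y' : Y} (hy : y ∈ V) (hy' : y' ∈ V) {w w' : W} (hw : w ∈ Ω)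
    (hw' : w' ∈ Ω) :
    Γ (y', w') ∩ U ⊆ Γ (y, w) + closedBall 0 ((k + ε) * (η * ‖y - y'‖ + lam * ‖w - w'‖)) := by
  rintro x ⟨hxΓ, hxU⟩
  rw [hΓ] at hxΓ
  obtain ⟨v, hvF, hv⟩ := hxΓ
  rw [add_eq_zero_iff_eq_neg] at hv
  subst hv
  obtain ⟨u, hu, hvu⟩ :=
    mem_add_closedBall_zero_iff.1 (hlip x hxU y' hy' y hy ⟨hvF, hgW w' hw'⟩)
  have hdist : dist (-g w) u ≤ η * ‖y - y'‖ + lam * ‖w - w'‖ :=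
    calc dist (-g w) u ≤ dist (-g w) (-g w') + dist (-g w') u := dist_triangle _ _ _
      _ ≤ lam * ‖w - w'‖ + η * ‖y - y'‖ := by
        rw [dist_neg_neg, dist_eq_norm, norm_sub_rev y]
        exact add_le_add (hg w hw w' hw') hvu
      _ = _ := add_comm _ _
  obtain ⟨x', hx', hxx'⟩ := exists_dist_le_of_infEDist_le_mul (G := fun x' ↦ F (x', y)) hk hε
    (hreg x hxU y hy (-g w) (hgW w hw)) hu hdist
  rw [hΓ]
  exact mem_add_closedBall_zero_iff.2 ⟨x', ⟨-g w, hx', neg_add_cancel _⟩, hxx'⟩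

theorem exists_lipschitzLike_of_inter_closedBall_subset {Γ : Y × W → Set X} {xb : X} {yb : Y}
    {wb : W} {α c η lam : ℝ} (hα : 0 < α) (hc : 0 ≤ c)
    (h : ∀ y ∈ closedBall yb α, ∀ w ∈ closedBall wb α, ∀ y' ∈ closedBall yb α,
      ∀ w' ∈ closedBall wb α, Γ (y', w') ∩ closedBall xb α ⊆
        Γ (y, w) + closedBall 0 (c * (η * ‖y - y'‖ + lam * ‖w - w'‖))) :
    ∃ L > (0 : ℝ), ∃ V ∈ 𝓝 (yb, wb), ∃ U ∈ 𝓝 xb, ∀ q ∈ V, ∀ q' ∈ V,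
      Γ q ∩ U ⊆ Γ q' + closedBall (0 : X) (L * (‖q.1 - q'.1‖ + ‖q.2 - q'.2‖)) := by
  refine ⟨max (c * max η lam) 1, by positivity, _,
    prod_mem_nhds (closedBall_mem_nhds yb hα) (closedBall_mem_nhds wb hα), _,
    closedBall_mem_nhds xb hα, ?_⟩
  rintro ⟨y', w'⟩ ⟨hy', hw'⟩ ⟨y, w⟩ ⟨hy, hw⟩
  refine (h y hy w hw y' hy' w' hw').trans (add_subset_add_left (closedBall_subset_closedBall ?_))
  rw [norm_sub_rev y, norm_sub_rev w]
  calc c * (η * ‖y' - y‖ + lam * ‖w' - w‖)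
      ≤ c * (max η lam * (‖y' - y‖ + ‖w' - w‖)) := by
        gcongr
        rw [mul_add]
        gcongr
        exacts [le_max_left _ _, le_max_right _ _]
    _ ≤ max (c * max η lam) 1 * (‖y' - y‖ + ‖w' - w‖) := by
        rw [← mul_assoc]
        gcongr
        exact le_max_left _ _

end ImplicitMultifunction

theorem stmt8_general {X Y Z W : Type*}
    [NormedAddCommGroup X] [NormedAddCommGroup Y] [NormedAddCommGroup Z] [NormedAddCommGroup W]
    (F : X × Y → Set Z) (g : W → Z) (xb : X) (yb : Y) (zb : Z) (wb : W)
    (hzb : zb = -g wb)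
    (Γ : Y × W → Set X)
    (hΓ : ∀ y w, Γ (y, w) = {x : X | ∃ v ∈ F (x, y), v + g w = 0})
    (η : ℝ)
    -- (i) F is Lipschitz-like w.r.t. y uniformly in x around ((xb,yb),zb), constant η
    (hFlip : ∃ U ∈ 𝓝 xb, ∃ V ∈ 𝓝 yb, ∃ W₀ ∈ 𝓝 zb, ∀ x ∈ U, ∀ y ∈ V, ∀ y' ∈ V,
      F (x, y) ∩ W₀ ⊆ F (x, y') + closedBall (0 : Z) (η * ‖y - y'‖))
    (k : ℝ) (hk : 0 < k)
    -- (ii) F is metrically regular w.r.t. x uniformly in y around ((xb,yb),zb), constant k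
    (hFreg : ∃ U ∈ 𝓝 xb, ∃ V ∈ 𝓝 yb, ∃ W₀ ∈ 𝓝 zb, ∀ x ∈ U, ∀ y ∈ V, ∀ z ∈ W₀,
      EMetric.infEdist x {x' : X | z ∈ F (x', y)} ≤
        ENNReal.ofReal k * EMetric.infEdist z (F (x, y)))
    (lam : ℝ)
    -- (iv) g is Lipschitz around wb with constant lam
    (hg : ∃ U ∈ 𝓝 wb, ∀ w ∈ U, ∀ w' ∈ U, ‖g w - g w'‖ ≤ lam * ‖w - w'‖) :
    (∃ α > (0 : ℝ), ∀ y ∈ closedBall yb α, ∀ w ∈ closedBall wb α,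
      ∀ y' ∈ closedBall yb α, ∀ w' ∈ closedBall wb α, ∀ ε > (0 : ℝ),
      Γ (y', w') ∩ closedBall xb α ⊆
        Γ (y, w) + closedBall (0 : X) ((k + ε) * (η * ‖y - y'‖ + lam * ‖w - w'‖))) ∧
    (∃ L > (0 : ℝ), ∃ V ∈ 𝓝 (yb, wb), ∃ U ∈ 𝓝 xb, ∀ q ∈ V, ∀ q' ∈ V,
      Γ q ∩ U ⊆ Γ q' + closedBall (0 : X) (L * (‖q.1 - q'.1‖ + ‖q.2 - q'.2‖))) := by
  subst hzb
  obtain ⟨U₁, hU₁, V₁, hV₁, W₁, hW₁, hlip⟩ := hFlip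
  obtain ⟨U₂, hU₂, V₂, hV₂, W₂, hW₂, hreg⟩ := hFreg
  obtain ⟨Ω, hΩ, hgΩ⟩ := hg
  have hgW : ∀ᶠ w in 𝓝 wb, -g w ∈ W₁ ∩ W₂ := by
    have hgc : ContinuousAt g wb := (LipschitzOnWith.of_dist_le'
      (by simpa only [dist_eq_norm] using hgΩ)).continuousOn.continuousAt hΩ
    exact hgc.neg.eventually_mem (inter_mem hW₁ hW₂)
  obtain ⟨α, hα, hUα, hVα, hΩα⟩ :=
    exists_closedBall_subset_of_mem_nhds₃ (inter_mem hU₁ hU₂) (inter_mem hV₁ hV₂) (inter_mem hΩ hgW)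
  have hlip' : LipschitzLikeInSnd F (closedBall xb α) (closedBall yb α) (W₁ ∩ W₂) η :=
    LipschitzLikeInSnd.mono hlip (hUα.trans inter_subset_left) (hVα.trans inter_subset_left)
      inter_subset_left
  have hreg' : MetricallyRegularInFst F (closedBall xb α) (closedBall yb α) (W₁ ∩ W₂) k :=
    MetricallyRegularInFst.mono hreg (hUα.trans inter_subset_right)
      (hVα.trans inter_subset_right) inter_subset_right
  refine ⟨⟨α, hα, ?estimate⟩, exists_lipschitzLike_of_inter_closedBall_subset hα (by linarith)
    fun y hy w hw y' hy' w' hw' ↦ ?estimate y hy w hw y' hy' w' hw' 1 one_pos⟩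
  exact fun y hy w hw y' hy' w' hw' ε hε ↦ implicit_inter_subset_add_closedBall hΓ hlip' hreg'
    (fun w hw w' hw' ↦ hgΩ w (hΩα hw).1 w' (hΩα hw').1) (fun w hw ↦ (hΩα hw).2) hk.le hε
    hy hy' hw hw'

/-- Lipschitz-like behavior of the implicit multifunction
`Γ(y,w) = {x : 0 ∈ F(x,y) + g(w)}`. -/
theorem stmt8 {X Y Z W : Type*}
    [NormedAddCommGroup X] [NormedSpace ℝ X] [CompleteSpace X]
    [NormedAddCommGroup Y] [NormedSpace ℝ Y] [CompleteSpace Y]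
    [NormedAddCommGroup Z] [NormedSpace ℝ Z] [CompleteSpace Z]
    [NormedAddCommGroup W] [NormedSpace ℝ W] [CompleteSpace W]
    (F : X × Y → Set Z) (g : W → Z) (xb : X) (yb : Y) (zb : Z) (wb : W)
    (hzb : zb = -g wb) (hzbF : zb ∈ F (xb, yb))
    (Γ : Y × W → Set X)
    (hΓ : ∀ y w, Γ (y, w) = {x : X | ∃ v ∈ F (x, y), v + g w = 0})
    (η : ℝ) (hη : 0 ≤ η)
    -- (i) F is Lipschitz-like w.r.t. y uniformly in x around ((xb,yb),zb), constant η
    (hFlip : ∃ U ∈ 𝓝 xb, ∃ V ∈ 𝓝 yb, ∃ W₀ ∈ 𝓝 zb, ∀ x ∈ U, ∀ y ∈ V, ∀ y' ∈ V,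
      F (x, y) ∩ W₀ ⊆ F (x, y') + closedBall (0 : Z) (η * ‖y - y'‖))
    (k : ℝ) (hk : 0 < k)
    -- (ii) F is metrically regular w.r.t. x uniformly in y around ((xb,yb),zb), constant k
    (hFreg : ∃ U ∈ 𝓝 xb, ∃ V ∈ 𝓝 yb, ∃ W₀ ∈ 𝓝 zb, ∀ x ∈ U, ∀ y ∈ V, ∀ z ∈ W₀,
      EMetric.infEdist x {x' : X | z ∈ F (x', y)} ≤
        ENNReal.ofReal k * EMetric.infEdist z (F (x, y)))
    -- (iii) F(·,y) is inner semicontinuous at (xb, zb) for y near yb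
    (hisc : ∃ N ∈ 𝓝 yb, ∀ y ∈ N, ∀ D : Set Z, IsOpen D → zb ∈ D →
      ∃ U ∈ 𝓝 xb, ∀ x ∈ U, (F (x, y) ∩ D).Nonempty)
    (lam : ℝ) (hlam : 0 ≤ lam)
    -- (iv) g is Lipschitz around wb with constant lam
    (hg : ∃ U ∈ 𝓝 wb, ∀ w ∈ U, ∀ w' ∈ U, ‖g w - g w'‖ ≤ lam * ‖w - w'‖) :
    (∃ α > (0 : ℝ), ∀ y ∈ closedBall yb α, ∀ w ∈ closedBall wb α,
      ∀ y' ∈ closedBall yb α, ∀ w' ∈ closedBall wb α, ∀ ε > (0 : ℝ),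
      Γ (y', w') ∩ closedBall xb α ⊆
        Γ (y, w) + closedBall (0 : X) ((k + ε) * (η * ‖y - y'‖ + lam * ‖w - w'‖))) ∧
    (∃ L > (0 : ℝ), ∃ V ∈ 𝓝 (yb, wb), ∃ U ∈ 𝓝 xb, ∀ q ∈ V, ∀ q' ∈ V,
      Γ q ∩ U ⊆ Γ q' + closedBall (0 : X) (L * (‖q.1 - q'.1‖ + ‖q.2 - q'.2‖))) :=
  stmt8_general F g xb yb zb wb hzb Γ hΓ η hFlip k hk hFreg lam hg
end

section
/- Let X, Y, P be real Banach spaces, F : X × P ⇒ Y and G : X ⇒ Y multifunctions and (x̄,p̄,ȳ) ∈ X × P × Y with ȳ ∈ F(x̄,p̄) and −ȳ ∈ G(x̄). Let S : P ⇒ X be defined by S(p) = {x ∈ X : 0 ∈ F(x,p) + G(x)}. Assume: (i) (F,G) is locally sum-stable around (x̄,p̄,ȳ,−ȳ); (ii) for every p in a neighborhood of p̄, the graph of F(·,p) is closed; (iii) Gr G is closed; (iv) F is Lipschitz-like around ((x̄,p̄),ȳ) with constant L > 0 (sum norm on X × P); (v) G is metrically regular around (x̄,−ȳ) with constant m > 0;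 (vi) G is inner semicontinuous at (x̄,−ȳ); (vii) L·m < 1. Then: (a) there exist τ, t > 0 such that d(x, S(p)) ≤ m(1 − Lm)⁻¹ d(0, F(x,p) + G(x)) for every (x,p) ∈ B(x̄,τ) × B(p̄,t); and (b) there exist neighborhoods V of p̄ and U of x̄ such that d(x, S(p₂)) ≤ m L (1 − Lm)⁻¹ ‖p₁ − p₂‖ for every p₁,p₂ ∈ V and every x ∈ S(p₁) ∩ U; in particular S is Lipschitz-like around (p̄,x̄) with any constant λ > mL/(1 − Lm). -/
open Metric Set Filter Topology Pointwise

/-- The pair `(F, G)` is locally sum-stable around `(xb, pb, yb, zb)`. -/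
def LocSumStableP {X P Y : Type*} [NormedAddCommGroup X] [NormedAddCommGroup P]
    [NormedAddCommGroup Y] (F : X × P → Set Y) (G : X → Set Y)
    (xb : X) (pb : P) (yb zb : Y) : Prop :=
  ∀ ε > (0 : ℝ), ∃ δ > (0 : ℝ), ∀ x ∈ ball xb δ, ∀ p ∈ ball pb δ,
    ∀ w ∈ (F (x, p) + G x) ∩ ball (yb + zb) δ,
      ∃ y ∈ F (x, p) ∩ ball yb ε, ∃ z ∈ G x ∩ ball zb ε, w = y + z

/-- `F : X × P ⇒ Y` is Lipschitz-like around `((xb, pb), yb)` with constant `L`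
(sum norm on `X × P`). -/
def LipschitzLikeAroundP {X P Y : Type*} [NormedAddCommGroup X]
    [NormedAddCommGroup P] [NormedAddCommGroup Y] (F : X × P → Set Y)
    (xb : X) (pb : P) (yb : Y) (L : ℝ) : Prop :=
  ∃ U ∈ 𝓝 (xb, pb), ∃ W ∈ 𝓝 yb, ∀ q ∈ U, ∀ q' ∈ U,
    F q ∩ W ⊆ F q' + closedBall (0 : Y) (L * (‖q.1 - q'.1‖ + ‖q.2 - q'.2‖))

/-- `G : X ⇒ Y` is metrically regular around `(xb, zb)` with constant `m`. -/
def MetRegAround {X Y : Type*} [NormedAddCommGroup X] [NormedAddCommGroup Y]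
    (G : X → Set Y) (xb : X) (zb : Y) (m : ℝ) : Prop :=
  ∃ U ∈ 𝓝 xb, ∃ V ∈ 𝓝 zb, ∀ x ∈ U, ∀ y ∈ V,
    EMetric.infEdist x {u : X | y ∈ G u} ≤ ENNReal.ofReal m * EMetric.infEdist y (G x)

/-!
Solutions are produced by a Lyusternik–Graves iteration. Given `y ∈ F(x,p)` and `z ∈ G(x)`,
metric regularity of `G` yields `x'` with `-y ∈ G(x')` and `‖x' - x‖ ≲ m‖y + z‖`, and the
Lipschitz-like property of `F(·,p)` yields `y' ∈ F(x',p)` with `‖y' - y‖ ≤ L‖x' - x‖`. The new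
residual `‖y' + (-y)‖` is smaller by the factor `Lm < 1`, so the iterates form a Cauchy sequence
whose limit, by closedness of the graphs, solves `0 ∈ F(x,p) + G(x)` at distance at most
`m(1 - Lm)⁻¹‖y + z‖` from `x`. Sum-stability lets every small element of `F(x,p) + G(x)` start
the iteration near `(x̄, ȳ)`, and inner semicontinuity of `G` makes `d(0, F(x,p) + G(x))` small
near `(x̄, p̄)`; this gives (a). For (b), moving from `p₁` to `p₂` along the Lipschitz-like
property of `F` turns a solution for `p₁` into a point with residual at most `L‖p₁ - p₂‖`.
-/

theorem IsClosed.exists_mem_nonpos_of_geometric_step {T : Type*} [PseudoMetricSpace T]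
    [CompleteSpace T] {C : Set T} (hC : IsClosed C) {e : T → ℝ} (he : Continuous e)
    {K s : ℝ} (hK : 0 ≤ K) (hs₀ : 0 ≤ s) (hs₁ : s < 1)
    (hstep : ∀ a ∈ C, ∃ b ∈ C, dist a b ≤ K * e a ∧ e b ≤ s * e a) {a₀ : T} (ha₀ : a₀ ∈ C) :
    ∃ l ∈ C, e l ≤ 0 := by
  choose! next hnextC hdist hdecay using hstep
  set u : ℕ → T := fun n => next^[n] a₀
  have hu_succ (n : ℕ) : u (n + 1) = next (u n) := Function.iterate_succ_apply' next n a₀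
  have huC (n : ℕ) : u n ∈ C := by
    induction n with
    | zero => exact ha₀
    | succ n ih => exact hu_succ n ▸ hnextC _ ih
  have hue (n : ℕ) : e (u n) ≤ s ^ n * e a₀ := by
    induction n with
    | zero => simp [u]
    | succ n ih =>
      calc e (u (n + 1)) ≤ s * e (u n) := hu_succ n ▸ hdecay _ (huC n)
        _ ≤ s ^ (n + 1) * e a₀ := by
          rw [pow_succ', mul_assoc]; exact mul_le_mul_of_nonneg_left ih hs₀
  have hcauchy : CauchySeq u := by
    refine cauchySeq_of_le_geometric s (K * e a₀) hs₁ fun n => ?_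
    calc dist (u n) (u (n + 1)) ≤ K * e (u n) := hu_succ n ▸ hdist _ (huC n)
      _ ≤ K * e a₀ * s ^ n := by
        rw [mul_assoc, mul_comm _ (s ^ n)]; exact mul_le_mul_of_nonneg_left (hue n) hK
  obtain ⟨l, hl⟩ := cauchySeq_tendsto_of_complete hcauchy
  refine ⟨l, hC.mem_of_tendsto hl (Eventually.of_forall huC), ?_⟩
  have hlim : Tendsto (fun n => s ^ n * e a₀) atTop (𝓝 0) := by
    simpa using (tendsto_pow_atTop_nhds_zero_of_lt_one hs₀ hs₁).mul_const (e a₀)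
  exact le_of_tendsto_of_tendsto' ((he.tendsto l).comp hl) hlim hue

section Iteration

variable {X Y : Type*} [NormedAddCommGroup X] [NormedAddCommGroup Y]
  {H G : X → Set Y} {xb : X} {yb : Y} {r L m m' : ℝ}

theorem exists_lyusternikGraves_step
    (hreg : ∀ x ∈ ball xb r, ∀ v ∈ ball (-yb) r,
      infEDist x {u | v ∈ G u} ≤ ENNReal.ofReal m * infEDist v (G x))
    (hlip : ∀ x ∈ ball xb r, ∀ x' ∈ ball xb r,
      H x ∩ ball yb r ⊆ H x' + closedBall 0 (L * dist x x'))
    (hmm' : m < m') (hm' : 0 < m') (hL : 0 ≤ L) {x : X} {y z : Y} (hy : y ∈ H x) (hz : z ∈ G x)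
    (hx : dist x xb + m' * ‖y + z‖ < r) (hyb : dist y yb < r) :
    ∃ x' y', y' ∈ H x' ∧ -y ∈ G x' ∧ dist x' x ≤ m' * ‖y + z‖ ∧
      dist y' y ≤ L * m' * ‖y + z‖ := by
  obtain hyz | hyz := eq_or_ne (y + z) 0
  · refine ⟨x, y, hy, ?_, by simp [hyz], by simp [hyz]⟩
    rwa [neg_eq_of_add_eq_zero_right hyz]
  have hres : 0 < ‖y + z‖ := norm_pos_iff.mpr hyz
  have hxr : x ∈ ball xb r := by
    rw [mem_ball]; nlinarith
  have hyr : -y ∈ ball (-yb) r := by rwa [mem_ball, dist_neg_neg]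
  have hlt : infEDist x {u | -y ∈ G u} < ENNReal.ofReal (m' * ‖y + z‖) :=
    calc infEDist x {u | -y ∈ G u} ≤ ENNReal.ofReal m * infEDist (-y) (G x) := hreg x hxr _ hyr
      _ ≤ ENNReal.ofReal m * ENNReal.ofReal ‖y + z‖ := by
        gcongr
        refine (infEDist_le_edist_of_mem hz).trans_eq ?_
        rw [edist_dist, dist_eq_norm, ← norm_neg]; congr 2; abel
      _ = ENNReal.ofReal (m * ‖y + z‖) := (ENNReal.ofReal_mul' hres.le).symm
      _ < ENNReal.ofReal (m' * ‖y + z‖) :=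
        (ENNReal.ofReal_lt_ofReal_iff (by positivity)).mpr (by gcongr)
  obtain ⟨x', hx'G, hxx'⟩ := infEDist_lt_iff.mp hlt
  rw [edist_lt_ofReal, dist_comm] at hxx'
  have hx'r : x' ∈ ball xb r := by
    rw [mem_ball]; linarith [dist_triangle x' x xb]
  obtain ⟨y', hy', e, he, hye⟩ := hlip x hxr x' hx'r ⟨hy, mem_ball.mpr hyb⟩
  refine ⟨x', y', hy', hx'G, hxx'.le, ?_⟩
  calc dist y' y = ‖e‖ := by rw [← hye, dist_eq_norm, ← norm_neg]; simp
    _ ≤ L * dist x x' := mem_closedBall_zero_iff.mp he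
    _ ≤ L * m' * ‖y + z‖ := by
      rw [mul_assoc, dist_comm]; exact mul_le_mul_of_nonneg_left hxx'.le hL

theorem exists_zero_mem_add_of_metricRegular_of_lipschitz [CompleteSpace X] [CompleteSpace Y]
    (hHcl : IsClosed {q : X × Y | q.2 ∈ H q.1}) (hGcl : IsClosed {q : X × Y | q.2 ∈ G q.1})
    (hreg : ∀ x ∈ ball xb r, ∀ v ∈ ball (-yb) r,
      infEDist x {u | v ∈ G u} ≤ ENNReal.ofReal m * infEDist v (G x))
    (hlip : ∀ x ∈ ball xb r, ∀ x' ∈ ball xb r,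
      H x ∩ ball yb r ⊆ H x' + closedBall 0 (L * dist x x'))
    (hmm' : m < m') (hm' : 0 < m') (hL : 0 ≤ L) (hLm' : L * m' < 1)
    {x₀ : X} {y₀ z₀ : Y} (hy₀ : y₀ ∈ H x₀) (hz₀ : z₀ ∈ G x₀)
    (hx₀ : dist x₀ xb + m' * (1 - L * m')⁻¹ * ‖y₀ + z₀‖ < r)
    (hy₀b : dist y₀ yb + L * m' * (1 - L * m')⁻¹ * ‖y₀ + z₀‖ < r) :
    ∃ x, 0 ∈ H x + G x ∧ dist x x₀ ≤ m' * (1 - L * m')⁻¹ * ‖y₀ + z₀‖ := by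
  set s := L * m'
  set A := m' * (1 - s)⁻¹
  set B := s * (1 - s)⁻¹
  have hs : 0 ≤ s := by positivity
  have h1s : 0 < 1 - s := by linarith
  have hA : A * (1 - s) = m' := inv_mul_cancel_right₀ h1s.ne' m'
  have hB : B * (1 - s) = s := inv_mul_cancel_right₀ h1s.ne' s
  have hm'A : m' ≤ A := le_mul_of_one_le_right hm'.le (one_le_inv₀ h1s |>.mpr (by linarith))
  have hB0 : 0 ≤ B := by positivity
  -- Invariant: distance travelled plus what the residual may still cost stays within budget.
  let C : Set (X × Y × Y) := {a | a.2.1 ∈ H a.1 ∧ a.2.2 ∈ G a.1 ∧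
    dist a.1 x₀ + A * ‖a.2.1 + a.2.2‖ ≤ A * ‖y₀ + z₀‖ ∧
    dist a.2.1 y₀ + B * ‖a.2.1 + a.2.2‖ ≤ B * ‖y₀ + z₀‖}
  have hC : IsClosed C := by
    simp only [C, ofPred_and]
    exact (hHcl.preimage (f := fun a : X × Y × Y => (a.1, a.2.1)) (by fun_prop)).inter
      ((hGcl.preimage (f := fun a : X × Y × Y => (a.1, a.2.2)) (by fun_prop)).inter
      ((isClosed_le (by fun_prop) (by fun_prop)).inter (isClosed_le (by fun_prop) (by fun_prop))))
  have hstep : ∀ a ∈ C, ∃ b ∈ C, dist a b ≤ (m' + 1) * ‖a.2.1 + a.2.2‖ ∧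
      ‖b.2.1 + b.2.2‖ ≤ s * ‖a.2.1 + a.2.2‖ := by
    rintro ⟨x, y, z⟩ ⟨hy, hz, hx, hyy⟩
    dsimp only at hy hz hx hyy ⊢
    have hres := norm_nonneg (y + z)
    obtain ⟨x', y', hy', hz', hxx', hyy'⟩ :=
      exists_lyusternikGraves_step hreg hlip hmm' hm' hL hy hz
      (by nlinarith [dist_triangle x x₀ xb]) (by nlinarith [dist_triangle y y₀ yb])
    have hres' : ‖y' + -y‖ ≤ s * ‖y + z‖ := by rwa [← sub_eq_add_neg, ← dist_eq_norm]
    refine ⟨(x', y', -y), ⟨hy', hz', ?_, ?_⟩, ?_, hres'⟩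
    · nlinarith [dist_triangle x' x x₀]
    · nlinarith [dist_triangle y' y y₀]
    · have hzy : dist z (-y) = ‖y + z‖ := by rw [dist_eq_norm, sub_neg_eq_add, add_comm]
      simp only [Prod.dist_eq, max_le_iff]
      refine ⟨?_, ?_, ?_⟩ <;> nlinarith [dist_comm x x', dist_comm y y']
  obtain ⟨⟨x, y, z⟩, ⟨hy, hz, hx, -⟩, hyz⟩ := hC.exists_mem_nonpos_of_geometric_step
    (by fun_prop) (by linarith) hs (by linarith) hstep
    (a₀ := (x₀, y₀, z₀)) ⟨hy₀, hz₀, by simp, by simp⟩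
  have hyz : y + z = 0 := norm_le_zero_iff.mp hyz
  exact ⟨x, ⟨y, hy, z, hz, hyz⟩, by simpa [hyz] using hx⟩

theorem infEDist_setOf_zero_mem_add_le [CompleteSpace X] [CompleteSpace Y]
    (hHcl : IsClosed {q : X × Y | q.2 ∈ H q.1}) (hGcl : IsClosed {q : X × Y | q.2 ∈ G q.1})
    (hreg : ∀ x ∈ ball xb r, ∀ v ∈ ball (-yb) r,
      infEDist x {u | v ∈ G u} ≤ ENNReal.ofReal m * infEDist v (G x))
    (hlip : ∀ x ∈ ball xb r, ∀ x' ∈ ball xb r,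
      H x ∩ ball yb r ⊆ H x' + closedBall 0 (L * dist x x'))
    (hm : 0 < m) (hL : 0 < L) (hLm : L * m < 1) {x : X} {δ η : ℝ}
    (hdec : ∀ w ∈ H x + G x, ‖w‖ < δ → ∃ y ∈ H x, ∃ z ∈ G x, dist y yb < η ∧ w = y + z)
    (hδ : infEDist 0 (H x + G x) < ENNReal.ofReal δ)
    (hxr : dist x xb + m * (1 - L * m)⁻¹ * δ ≤ r) (hyr : η + L * m * (1 - L * m)⁻¹ * δ ≤ r) :
    infEDist x {u | 0 ∈ H u + G u} ≤
      ENNReal.ofReal (m * (1 - L * m)⁻¹) * infEDist 0 (H x + G x) := by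
  set d := (infEDist 0 (H x + G x)).toReal
  have hD : infEDist 0 (H x + G x) = ENNReal.ofReal d := (ENNReal.ofReal_toReal hδ.ne_top).symm
  have hdδ : d < δ := by
    rw [hD, ENNReal.ofReal_lt_ofReal_iff_of_nonneg ENNReal.toReal_nonneg] at hδ; exact hδ
  have hA : 0 < m * (1 - L * m)⁻¹ := mul_pos hm (inv_pos.mpr (by linarith))
  have h1Lm : 1 - L * m ≠ 0 := by linarith
  rw [hD, ← ENNReal.ofReal_mul hA.le]
  -- Metric regularity only bounds an infimum, so the iteration runs with a constant `m + ε > m`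
  -- and a residual below `d + ε`; then `ε → 0`.
  set f : ℝ → ℝ := fun ε => (m + ε) * (1 - L * (m + ε))⁻¹ * (d + ε)
  have hf : ContinuousAt f 0 := by fun_prop (disch := simpa using h1Lm)
  have hev : ∀ᶠ ε in 𝓝 (0 : ℝ), L * (m + ε) < 1 ∧ dist x xb + f ε < r ∧
      η + L * f ε < r ∧ d + ε < δ := by
    refine (ContinuousAt.eventually_lt (by fun_prop) continuousAt_const (by simpa)).and <|
      (ContinuousAt.eventually_lt (by fun_prop) continuousAt_const ?_).and <|
      (ContinuousAt.eventually_lt (by fun_prop) continuousAt_const ?_).and <|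
      ContinuousAt.eventually_lt (by fun_prop) continuousAt_const (by simpa)
    · simp only [f, add_zero]; nlinarith [mul_lt_mul_of_pos_left hdδ hA]
    · simp only [f, add_zero]; nlinarith [mul_lt_mul_of_pos_left hdδ (mul_pos hL hA)]
  have hlim : Tendsto (fun ε => ENNReal.ofReal (f ε)) (𝓝[>] 0)
      (𝓝 (ENNReal.ofReal (m * (1 - L * m)⁻¹ * d))) := by
    simpa [f, Function.comp_def] using
      ((ENNReal.continuous_ofReal.tendsto _).comp hf.tendsto).mono_left nhdsWithin_le_nhds
  refine ge_of_tendsto hlim ?_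
  filter_upwards [self_mem_nhdsWithin, nhdsWithin_le_nhds hev] with ε (hε : 0 < ε)
    ⟨hLm', hxε, hyε, hδε⟩
  obtain ⟨w, hw, hwd⟩ : ∃ w ∈ H x + G x, edist 0 w < ENNReal.ofReal (d + ε) :=
    infEDist_lt_iff.mp (hD ▸ (ENNReal.ofReal_lt_ofReal_iff (by positivity)).mpr (by linarith))
  rw [edist_lt_ofReal, dist_zero_left] at hwd
  obtain ⟨y₀, hy₀, z₀, hz₀, hy₀b, rfl⟩ := hdec w hw (by linarith)
  have hA' : 0 ≤ (m + ε) * (1 - L * (m + ε))⁻¹ :=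
    mul_nonneg (by linarith) (inv_nonneg.mpr (by linarith))
  have hfw : (m + ε) * (1 - L * (m + ε))⁻¹ * ‖y₀ + z₀‖ ≤ f ε :=
    mul_le_mul_of_nonneg_left hwd.le hA'
  obtain ⟨xs, hxs, hdist⟩ := exists_zero_mem_add_of_metricRegular_of_lipschitz hHcl hGcl hreg
    hlip (m' := m + ε) (by linarith) (by linarith) hL.le hLm' hy₀ hz₀ (by linarith)
    (by nlinarith)
  calc infEDist x {u | 0 ∈ H u + G u} ≤ edist x xs := infEDist_le_edist_of_mem hxs
    _ ≤ ENNReal.ofReal (f ε) := by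
      rw [edist_dist, dist_comm]; exact ENNReal.ofReal_le_ofReal (hdist.trans hfw)

end Iteration

section Parametric

variable {X P Y : Type*} [NormedAddCommGroup X] [NormedAddCommGroup P] [NormedAddCommGroup Y]
  {F : X × P → Set Y} {G : X → Set Y} {xb : X} {pb : P} {yb : Y} {L m : ℝ}

theorem LipschitzLikeAroundP.eventually_ball (h : LipschitzLikeAroundP F xb pb yb L) :
    ∀ᶠ r in 𝓝[>] (0 : ℝ), ∀ x ∈ ball xb r, ∀ p ∈ ball pb r, ∀ x' ∈ ball xb r, ∀ p' ∈ ball pb r,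
      F (x, p) ∩ ball yb r ⊆ F (x', p') + closedBall 0 (L * (dist x x' + dist p p')) := by
  obtain ⟨U, hU, W, hW, hlip⟩ := h
  filter_upwards [nhdsWithin_le_nhds (eventually_ball_subset hU),
    nhdsWithin_le_nhds (eventually_ball_subset hW)] with r hUr hWr
  intro x hx p hp x' hx' p' hp'
  simpa only [dist_eq_norm] using (inter_subset_inter_right _ hWr).trans <|
    hlip (x, p) (hUr (ball_prod_same xb pb r ▸ mk_mem_prod hx hp))
      (x', p') (hUr (ball_prod_same xb pb r ▸ mk_mem_prod hx' hp'))

theorem MetRegAround.eventually_ball {zb : Y} (h : MetRegAround G xb zb m) :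
    ∀ᶠ r in 𝓝[>] (0 : ℝ), ∀ x ∈ ball xb r, ∀ v ∈ ball zb r,
      infEDist x {u | v ∈ G u} ≤ ENNReal.ofReal m * infEDist v (G x) := by
  obtain ⟨U, hU, V, hV, hreg⟩ := h
  filter_upwards [nhdsWithin_le_nhds (eventually_ball_subset hU),
    nhdsWithin_le_nhds (eventually_ball_subset hV)] with r hUr hVr
  exact fun x hx v hv => hreg x (hUr hx) v (hVr hv)

theorem LocSumStableP.eventually_ball (h : LocSumStableP F G xb pb yb (-yb)) {ε : ℝ}
    (hε : 0 < ε) :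
    ∀ᶠ δ in 𝓝[>] (0 : ℝ), ∀ x ∈ ball xb δ, ∀ p ∈ ball pb δ, ∀ w ∈ F (x, p) + G x, ‖w‖ < δ →
      ∃ y ∈ F (x, p), ∃ z ∈ G x, dist y yb < ε ∧ w = y + z := by
  obtain ⟨δ₀, hδ₀, hdec⟩ := h ε hε
  filter_upwards [Ioo_mem_nhdsGT hδ₀] with δ hδ x hx p hp w hw hwδ
  obtain ⟨y, hy, z, hz, rfl⟩ := hdec x (ball_subset_ball hδ.2.le hx) p
    (ball_subset_ball hδ.2.le hp) w ⟨hw, by simpa using hwδ.trans hδ.2⟩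
  exact ⟨y, hy.1, z, hz.1, hy.2, rfl⟩

theorem eventually_infEDist_zero_add_lt (hybF : yb ∈ F (xb, pb))
    (hFlip : LipschitzLikeAroundP F xb pb yb L) (hGisc : InnerSemicontinuousAt G xb (-yb))
    {β : ℝ} (hβ : 0 < β) : ∀ᶠ q in 𝓝 (xb, pb), infEDist 0 (F q + G q.1) < ENNReal.ofReal β := by
  obtain ⟨U, hU, W, hW, hlip⟩ := hFlip
  obtain ⟨V, hV, hGV⟩ := hGisc (ball (-yb) (β / 2)) isOpen_ball (mem_ball_self (half_pos hβ))
  have hshift : ∀ᶠ q in 𝓝 (xb, pb), L * (‖xb - q.1‖ + ‖pb - q.2‖) < β / 2 :=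
    ContinuousAt.eventually_lt (by fun_prop) continuousAt_const (by simpa using half_pos hβ)
  filter_upwards [hU, continuous_fst.continuousAt hV, hshift] with q hqU hqV hqshift
  obtain ⟨z, hz, hzb⟩ := hGV q.1 hqV
  obtain ⟨y, hy, e, he, hye⟩ := hlip (xb, pb) (mem_of_mem_nhds hU) q hqU
    ⟨hybF, mem_of_mem_nhds hW⟩
  have hyz : y + z = (z - -yb) - e := by rw [eq_sub_of_add_eq hye]; abel
  have hnorm : ‖y + z‖ < β := by
    rw [mem_ball, dist_eq_norm] at hzb
    rw [mem_closedBall_zero_iff] at he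
    rw [hyz]
    linarith [norm_sub_le (z - -yb) e]
  calc infEDist 0 (F q + G q.1) ≤ edist 0 (y + z) := infEDist_le_edist_of_mem (add_mem_add hy hz)
    _ < ENNReal.ofReal β := by rwa [edist_lt_ofReal, dist_zero_left]

theorem eventually_infEDist_setOf_zero_mem_add_le [CompleteSpace X] [CompleteSpace Y]
    (hybF : yb ∈ F (xb, pb)) (hsum : LocSumStableP F G xb pb yb (-yb))
    (hFcl : ∃ N ∈ 𝓝 pb, ∀ p ∈ N, IsClosed {q : X × Y | q.2 ∈ F (q.1, p)})
    (hGcl : IsClosed {q : X × Y | q.2 ∈ G q.1}) (hL : 0 < L)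
    (hFlip : LipschitzLikeAroundP F xb pb yb L) (hm : 0 < m) (hGreg : MetRegAround G xb (-yb) m)
    (hGisc : InnerSemicontinuousAt G xb (-yb)) (hLm : L * m < 1) :
    ∀ᶠ q in 𝓝 (xb, pb), infEDist q.1 {x | 0 ∈ F (x, q.2) + G x} ≤
      ENNReal.ofReal (m * (1 - L * m)⁻¹) * infEDist 0 (F q + G q.1) := by
  obtain ⟨N, hN, hNcl⟩ := hFcl
  obtain ⟨r, ⟨⟨hlip, hreg⟩, hrN⟩, hr⟩ := ((hFlip.eventually_ball.and hGreg.eventually_ball).and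
    ((eventually_ball_subset hN).filter_mono nhdsWithin_le_nhds)).and self_mem_nhdsWithin |>.exists
  obtain ⟨δ, hdec, hδ⟩ := ((hsum.eventually_ball (half_pos hr)).and self_mem_nhdsWithin).exists
  set A := m * (1 - L * m)⁻¹
  have hβ : ∀ᶠ β in 𝓝[>] (0 : ℝ), β < δ ∧ (A + L * A) * β < r / 2 :=
    ((continuousAt_id.eventually_lt continuousAt_const hδ).and
      (ContinuousAt.eventually_lt (f := fun β => (A + L * A) * β) (by fun_prop) continuousAt_const
        (by simpa using half_pos hr))).filter_mono nhdsWithin_le_nhds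
  obtain ⟨β, ⟨hβδ, hβr⟩, hβ⟩ := (hβ.and self_mem_nhdsWithin).exists
  have hA : 0 ≤ A := mul_nonneg hm.le (inv_nonneg.mpr (by linarith))
  filter_upwards [eventually_infEDist_zero_add_lt hybF hFlip hGisc hβ,
    prod_mem_nhds (ball_mem_nhds xb (lt_min hδ (half_pos hr))) (ball_mem_nhds pb (lt_min hδ hr))]
    with ⟨x, p⟩ hsmall ⟨hx, hp⟩
  dsimp only at hsmall hx hp ⊢
  rw [mem_ball, lt_min_iff] at hx hp
  have hlipx : ∀ u ∈ ball xb r, ∀ u' ∈ ball xb r,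
      F (u, p) ∩ ball yb r ⊆ F (u', p) + closedBall 0 (L * dist u u') := fun u hu u' hu' => by
    simpa using hlip u hu p (mem_ball.mpr hp.2) u' hu' p (mem_ball.mpr hp.2)
  refine infEDist_setOf_zero_mem_add_le (H := fun u => F (u, p)) (hNcl p (hrN (mem_ball.mpr hp.2)))
    hGcl hreg hlipx hm hL hLm
    (fun w hw hwβ => hdec x (mem_ball.mpr hx.1) p (mem_ball.mpr hp.1) w hw (hwβ.trans hβδ))
    hsmall ?_ ?_ <;> nlinarith [mul_nonneg hL.le hA]

theorem eventually_infEDist_zero_add_le_of_zero_mem (hsum : LocSumStableP F G xb pb yb (-yb))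
    (hFlip : LipschitzLikeAroundP F xb pb yb L) :
    ∀ᶠ ρ in 𝓝[>] (0 : ℝ), ∀ x ∈ ball xb ρ, ∀ p₁ ∈ ball pb ρ, ∀ p₂ ∈ ball pb ρ,
      0 ∈ F (x, p₁) + G x → infEDist 0 (F (x, p₂) + G x) ≤ ENNReal.ofReal (L * dist p₁ p₂) := by
  obtain ⟨r, hlip, hr⟩ := (hFlip.eventually_ball.and self_mem_nhdsWithin).exists
  filter_upwards [hsum.eventually_ball hr, Ioo_mem_nhdsGT hr] with ρ hdec hρ
  intro x hx p₁ hp₁ p₂ hp₂ h0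
  obtain ⟨y, hy, z, hz, hyb, hyz⟩ := hdec x hx p₁ hp₁ 0 h0 (by simpa using hρ.1)
  have hsub : ball xb ρ ⊆ ball xb r := ball_subset_ball hρ.2.le
  have hsub' : ball pb ρ ⊆ ball pb r := ball_subset_ball hρ.2.le
  obtain ⟨y₂, hy₂, e, he, hye⟩ := hlip x (hsub hx) p₁ (hsub' hp₁) x (hsub hx) p₂ (hsub' hp₂)
    ⟨hy, mem_ball.mpr hyb⟩
  have hy₂z : y₂ + z = -e := by
    rw [eq_neg_of_add_eq_zero_right hyz.symm, eq_sub_of_add_eq hye]; abel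
  calc infEDist 0 (F (x, p₂) + G x) ≤ edist 0 (y₂ + z) :=
        infEDist_le_edist_of_mem (add_mem_add hy₂ hz)
    _ ≤ ENNReal.ofReal (L * dist p₁ p₂) := by
      rw [edist_dist, dist_zero_left, hy₂z, norm_neg]
      simpa using ENNReal.ofReal_le_ofReal (mem_closedBall_zero_iff.mp he)

end Parametric

theorem mem_add_closedBall_of_infEDist_lt {E : Type*} [SeminormedAddCommGroup E] {s : Set E}
    {x : E} {r : ℝ} (h : infEDist x s < ENNReal.ofReal r) : x ∈ s + closedBall 0 r := by
  rw [← mem_thickening_iff_infEDist_lt, ← add_ball_zero] at h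
  exact add_subset_add_left ball_subset_closedBall h

theorem LipschitzLikeAround.of_infEDist_le {P X : Type*} [NormedAddCommGroup P]
    [NormedAddCommGroup X] {S : P → Set X} {pb : P} {xb : X} {V : Set P} {U : Set X}
    (hV : V ∈ 𝓝 pb) (hU : U ∈ 𝓝 xb) {κ lam : ℝ} (hκ : 0 ≤ κ) (hlam : κ < lam)
    (h : ∀ p₁ ∈ V, ∀ p₂ ∈ V, ∀ x ∈ S p₁ ∩ U, infEDist x (S p₂) ≤ ENNReal.ofReal (κ * ‖p₁ - p₂‖)) :
    LipschitzLikeAround S pb xb lam := by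
  refine ⟨V, hV, U, hU, fun p hp q hq x hx => ?_⟩
  obtain rfl | hpq := eq_or_ne p q
  · exact ⟨x, hx.1, 0, by simp, add_zero x⟩
  have hpq : 0 < ‖p - q‖ := norm_pos_iff.mpr (sub_ne_zero.mpr hpq)
  refine mem_add_closedBall_of_infEDist_lt ((h p hp q hq x hx).trans_lt ?_)
  exact (ENNReal.ofReal_lt_ofReal_iff (by nlinarith)).mpr (by gcongr)

theorem stmt14_general {X Y P : Type*}
    [NormedAddCommGroup X] [CompleteSpace X]
    [NormedAddCommGroup Y] [CompleteSpace Y]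
    [NormedAddCommGroup P]
    (F : X × P → Set Y) (G : X → Set Y) (xb : X) (pb : P) (yb : Y)
    (hybF : yb ∈ F (xb, pb))
    (S : P → Set X) (hS : ∀ p, S p = {x : X | (0 : Y) ∈ F (x, p) + G x})
    -- (i) local sum-stability
    (hsum : LocSumStableP F G xb pb yb (-yb))
    -- (ii) closedness of the graphs of F(·,p) for p near pb
    (hFcl : ∃ N ∈ 𝓝 pb, ∀ p ∈ N, IsClosed {q : X × Y | q.2 ∈ F (q.1, p)})
    -- (iii) closedness of Gr G
    (hGcl : IsClosed {q : X × Y | q.2 ∈ G q.1})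
    (L : ℝ) (hL : 0 < L)
    -- (iv) F is Lipschitz-like around ((xb,pb), yb)
    (hFlip : LipschitzLikeAroundP F xb pb yb L)
    (m : ℝ) (hm : 0 < m)
    -- (v) G is metrically regular around (xb, -yb)
    (hGreg : MetRegAround G xb (-yb) m)
    -- (vi) G is inner semicontinuous at (xb, -yb)
    (hGisc : InnerSemicontinuousAt G xb (-yb))
    -- (vii)
    (hLm : L * m < 1) :
    (∃ τ > (0 : ℝ), ∃ t > (0 : ℝ), ∀ x ∈ ball xb τ, ∀ p ∈ ball pb t,
      EMetric.infEdist x (S p) ≤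
        ENNReal.ofReal (m * (1 - L * m)⁻¹) * EMetric.infEdist 0 (F (x, p) + G x)) ∧
    (∃ V ∈ 𝓝 pb, ∃ U ∈ 𝓝 xb, ∀ p₁ ∈ V, ∀ p₂ ∈ V, ∀ x ∈ S p₁ ∩ U,
      EMetric.infEdist x (S p₂) ≤
        ENNReal.ofReal (m * L * (1 - L * m)⁻¹ * ‖p₁ - p₂‖)) ∧
    (∀ lam : ℝ, m * L / (1 - L * m) < lam → LipschitzLikeAround S pb xb lam) := by
  obtain rfl : S = fun p => {x | (0 : Y) ∈ F (x, p) + G x} := funext hS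
  have hκ : 0 ≤ m * (1 - L * m)⁻¹ := mul_nonneg hm.le (inv_nonneg.mpr (by linarith))
  have hbound := eventually_ball_subset <|
    eventually_infEDist_setOf_zero_mem_add_le hybF hsum hFcl hGcl hL hFlip hm hGreg hGisc hLm
  obtain ⟨ρ, ⟨hbound, hres⟩, hρ⟩ := ((hbound.filter_mono nhdsWithin_le_nhds).and
    (eventually_infEDist_zero_add_le_of_zero_mem hsum hFlip)).and self_mem_nhdsWithin |>.exists
  have hA : ∀ x ∈ ball xb ρ, ∀ p ∈ ball pb ρ, infEDist x {u | 0 ∈ F (u, p) + G u} ≤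
      ENNReal.ofReal (m * (1 - L * m)⁻¹) * infEDist 0 (F (x, p) + G x) :=
    fun x hx p hp => hbound (ball_prod_same xb pb ρ ▸ mk_mem_prod hx hp)
  have hB : ∀ p₁ ∈ ball pb ρ, ∀ p₂ ∈ ball pb ρ, ∀ x ∈ {u | 0 ∈ F (u, p₁) + G u} ∩ ball xb ρ,
      infEDist x {u | 0 ∈ F (u, p₂) + G u} ≤
        ENNReal.ofReal (m * L * (1 - L * m)⁻¹ * ‖p₁ - p₂‖) := by
    rintro p₁ hp₁ p₂ hp₂ x ⟨hx₁, hx⟩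
    calc infEDist x {u | 0 ∈ F (u, p₂) + G u}
        ≤ ENNReal.ofReal (m * (1 - L * m)⁻¹) * infEDist 0 (F (x, p₂) + G x) := hA x hx p₂ hp₂
      _ ≤ ENNReal.ofReal (m * (1 - L * m)⁻¹) * ENNReal.ofReal (L * dist p₁ p₂) := by
        gcongr; exact hres x hx p₁ hp₁ p₂ hp₂ hx₁
      _ = ENNReal.ofReal (m * L * (1 - L * m)⁻¹ * ‖p₁ - p₂‖) := by
        rw [← ENNReal.ofReal_mul hκ, dist_eq_norm]; congr 1; ring
  refine ⟨⟨ρ, hρ, ρ, hρ, hA⟩, ⟨_, ball_mem_nhds pb hρ, _, ball_mem_nhds xb hρ, hB⟩,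
    fun lam hlam => ?_⟩
  exact LipschitzLikeAround.of_infEDist_le (ball_mem_nhds pb hρ) (ball_mem_nhds xb hρ)
    (by positivity) (by rwa [div_eq_mul_inv] at hlam) hB

/-- Lipschitz-like property of the solution map of the variational
system `0 ∈ F(x,p) + G(x)`. -/
theorem stmt14 {X Y P : Type*}
    [NormedAddCommGroup X] [NormedSpace ℝ X] [CompleteSpace X]
    [NormedAddCommGroup Y] [NormedSpace ℝ Y] [CompleteSpace Y]
    [NormedAddCommGroup P] [NormedSpace ℝ P] [CompleteSpace P]
    (F : X × P → Set Y) (G : X → Set Y) (xb : X) (pb : P) (yb : Y)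
    (hybF : yb ∈ F (xb, pb)) (hybG : -yb ∈ G xb)
    (S : P → Set X) (hS : ∀ p, S p = {x : X | (0 : Y) ∈ F (x, p) + G x})
    -- (i) local sum-stability
    (hsum : LocSumStableP F G xb pb yb (-yb))
    -- (ii) closedness of the graphs of F(·,p) for p near pb
    (hFcl : ∃ N ∈ 𝓝 pb, ∀ p ∈ N, IsClosed {q : X × Y | q.2 ∈ F (q.1, p)})
    -- (iii) closedness of Gr G
    (hGcl : IsClosed {q : X × Y | q.2 ∈ G q.1})
    (L : ℝ) (hL : 0 < L)
    -- (iv) F is Lipschitz-like around ((xb,pb), yb)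
    (hFlip : LipschitzLikeAroundP F xb pb yb L)
    (m : ℝ) (hm : 0 < m)
    -- (v) G is metrically regular around (xb, -yb)
    (hGreg : MetRegAround G xb (-yb) m)
    -- (vi) G is inner semicontinuous at (xb, -yb)
    (hGisc : InnerSemicontinuousAt G xb (-yb))
    -- (vii)
    (hLm : L * m < 1) :
    (∃ τ > (0 : ℝ), ∃ t > (0 : ℝ), ∀ x ∈ ball xb τ, ∀ p ∈ ball pb t,
      EMetric.infEdist x (S p) ≤
        ENNReal.ofReal (m * (1 - L * m)⁻¹) * EMetric.infEdist 0 (F (x, p) + G x)) ∧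
    (∃ V ∈ 𝓝 pb, ∃ U ∈ 𝓝 xb, ∀ p₁ ∈ V, ∀ p₂ ∈ V, ∀ x ∈ S p₁ ∩ U,
      EMetric.infEdist x (S p₂) ≤
        ENNReal.ofReal (m * L * (1 - L * m)⁻¹ * ‖p₁ - p₂‖)) ∧
    (∀ lam : ℝ, m * L / (1 - L * m) < lam → LipschitzLikeAround S pb xb lam) :=
  stmt14_general F G xb pb yb hybF S hS hsum hFcl hGcl L hL hFlip m hm hGreg hGisc hLm
end
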